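/- arXiv:1503.05168 — 6 statements merged into one kernel-verified Lean document; each statement's English description precedes it below -/
import Mathlib

section
/- Consider the controlled system with an admissible control α and its trajectory ξ on [0,T]. If ξ̄(0) > 0, then ξ̄(t) ≥ e^{−Mt/N} ξ̄(0) > 0 for every t ∈ [0,T]. Moreover, for any τ ∈ [0,T] and any index i: if ξ_i(τ) ≥ 0 then ξ_i(t) ≥ 0 for all t ∈ [τ,T], and if ξ_i(τ) > 0 then ξ_i(t) > 0 for all t ∈ [τ,T]. -/
open MeasureTheory Real

noncomputable section

/-- An admissible control: each component is measurable, on `[0,T]` the components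
indexed by the agents `1,…,N` take values in `[0,1]`, and their total is at most `M`. -/
def IsAdmissible (N : ℕ) (T M : ℝ) (α : ℝ → ℕ → ℝ) : Prop :=
  (∀ i, Measurable fun t => α t i) ∧
  (∀ t ∈ Set.Icc (0 : ℝ) T, ∀ i ∈ Finset.Icc 1 N, 0 ≤ α t i ∧ α t i ≤ 1) ∧
  (∀ t ∈ Set.Icc (0 : ℝ) T, ∑ i ∈ Finset.Icc 1 N, α t i ≤ M)

/-- The mean `ξ̄(s) = (1/N) ∑_{j=1}^N ξ_j(s)` of the state. -/
def xbar (N : ℕ) (ξ : ℝ → ℕ → ℝ) (s : ℝ) : ℝ :=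
  (N : ℝ)⁻¹ * ∑ j ∈ Finset.Icc 1 N, ξ s j

/-- The trajectory of a control `α` with initial state `ξ0`: a continuous solution of
`ξ_i(t) = ξ⁰_i + ∫_0^t (−ξ_i(s) + (1 − α_i(s)) ξ̄(s)) ds` on `[0,T]`. -/
def IsTrajectory (N : ℕ) (T : ℝ) (α : ℝ → ℕ → ℝ) (ξ0 : ℕ → ℝ) (ξ : ℝ → ℕ → ℝ) : Prop :=
  (∀ i, ContinuousOn (fun t => ξ t i) (Set.Icc 0 T)) ∧
  (∀ t ∈ Set.Icc (0 : ℝ) T, ∀ i ∈ Finset.Icc 1 N,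
    ξ t i = ξ0 i + ∫ s in (0 : ℝ)..t, (-(ξ s i) + (1 - α s i) * xbar N ξ s))

/-!
The control is only measurable, so both bounds are Grönwall-type estimates read off integral
inequalities rather than differential ones. Summing the equations, the mean obeys
`ξ̄' = -(∑ αᵢ / N) ξ̄ ≥ -(M / N) max(ξ̄, 0)`, and once `ξ̄ ≥ 0` each component obeys
`ξᵢ' ≥ -ξᵢ ≥ -max(ξᵢ, 0)`. A continuous `f` with `f a ≥ 0` and
`f t ≥ f s - K ∫ₛᵗ max(f, 0)` stays nonnegative: on a stretch where `f < 0` the integral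
vanishes, so `f` cannot decrease there. Since `f - f a * e^{-K (t - a)}` satisfies the same
inequality, this yields `f t ≥ f a * e^{-K (t - a)}`.
-/

theorem nonneg_of_sub_integral_posPart_le {f : ℝ → ℝ} {a b K : ℝ}
    (hf : ContinuousOn f (Set.Icc a b)) (ha : 0 ≤ f a)
    (hineq : ∀ s t, a ≤ s → s ≤ t → t ≤ b → f s - K * ∫ x in s..t, max (f x) 0 ≤ f t) :
    ∀ t ∈ Set.Icc a b, 0 ≤ f t := by
  have hclosed : IsClosed ({x | 0 ≤ f x} ∩ Set.Icc a b) := by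
    rw [Set.inter_comm]
    exact hf.preimage_isClosed_of_isClosed isClosed_Icc isClosed_Ici
  refine fun t ht => hclosed.Icc_subset_of_forall_exists_gt ha ?_ ht
  rintro x ⟨hx, hxa, hxb⟩ y hxy
  by_contra hempty
  set z := min y b
  have hxz : x < z := lt_min hxy hxb
  have hneg : ∀ w ∈ Set.Ioc x z, f w < 0 := fun w hw =>
    not_le.1 fun h => hempty ⟨w, h, hw.1, hw.2.trans (min_le_left _ _)⟩
  have hzero : ∫ w in x..z, max (f w) 0 = 0 := by
    rw [intervalIntegral.integral_of_le hxz.le]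
    exact setIntegral_eq_zero_of_forall_eq_zero fun w hw => max_eq_right (hneg w hw).le
  have hstep := hineq x z hxa hxz.le (min_le_right _ _)
  rw [hzero, mul_zero, sub_zero] at hstep
  exact (hneg z ⟨hxz, le_rfl⟩).not_ge (hx.trans hstep)

theorem mul_exp_le_of_sub_integral_posPart_le {f : ℝ → ℝ} {a b K : ℝ} (hK : 0 ≤ K)
    (hf : ContinuousOn f (Set.Icc a b)) (ha : 0 ≤ f a)
    (hineq : ∀ s t, a ≤ s → s ≤ t → t ≤ b → f s - K * ∫ x in s..t, max (f x) 0 ≤ f t) :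
    ∀ t ∈ Set.Icc a b, f a * exp (-(K * (t - a))) ≤ f t := by
  set e : ℝ → ℝ := fun x => f a * exp (-(K * (x - a)))
  have he_cont : Continuous e := by fun_prop
  have he_nonneg : ∀ x, 0 ≤ e x := fun x => mul_nonneg ha (exp_pos _).le
  have he_deriv : ∀ x, HasDerivAt e (-K * e x) x := by
    intro x
    have hlin : HasDerivAt (fun x => -(K * (x - a))) (-K) x := by
      simpa using (((hasDerivAt_id' x).sub_const a).const_mul K).fun_neg
    exact (hlin.exp.const_mul (f a)).congr_deriv (by ring)
  suffices h : ∀ t ∈ Set.Icc a b, 0 ≤ f t - e t from fun t ht => sub_nonneg.1 (h t ht)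
  refine nonneg_of_sub_integral_posPart_le (K := K) (hf.sub he_cont.continuousOn) (by simp [e])
    fun s t hs hst htb => ?_
  have hsub : Set.uIcc s t ⊆ Set.Icc a b :=
    Set.uIcc_subset_Icc ⟨hs, hst.trans htb⟩ ⟨hs.trans hst, htb⟩
  have hf_int : IntervalIntegrable (fun x => max (f x) 0) volume s t :=
    ((hf.mono hsub).sup continuousOn_const).intervalIntegrable
  have he_int : IntervalIntegrable e volume s t := he_cont.intervalIntegrable s t
  have hfe_int : IntervalIntegrable (fun x => max (f x - e x) 0) volume s t :=
    (((hf.mono hsub).sub he_cont.continuousOn).sup continuousOn_const).intervalIntegrable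
  have he_integral : K * ∫ x in s..t, e x = e s - e t := by
    rw [← intervalIntegral.integral_const_mul, ← neg_sub,
      ← intervalIntegral.integral_eq_sub_of_hasDerivAt (fun x _ => he_deriv x)
        ((he_cont.const_mul _).intervalIntegrable _ _), ← intervalIntegral.integral_neg]
    congr 1; ext x; ring
  have hmono : (∫ x in s..t, max (f x) 0) - ∫ x in s..t, e x ≤ ∫ x in s..t, max (f x - e x) 0 := by
    rw [← intervalIntegral.integral_sub hf_int he_int]
    refine intervalIntegral.integral_mono_on hst (hf_int.sub he_int) hfe_int fun x _ => ?_
    have := he_nonneg x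
    rcases le_total 0 (f x) with h | h
    · rw [max_eq_left h]; exact le_max_left _ _
    · rw [max_eq_right h]; linarith [le_max_right (f x - e x) 0]
  have := hineq s t hs hst htb
  nlinarith [mul_le_mul_of_nonneg_left hmono hK]
def velocity (N : ℕ) (α : ℝ → ℕ → ℝ) (ξ : ℝ → ℕ → ℝ) (i : ℕ) (s : ℝ) : ℝ :=
  -(ξ s i) + (1 - α s i) * xbar N ξ s

section Trajectory

variable {N : ℕ} {T M : ℝ} {α : ℝ → ℕ → ℝ} {ξ0 : ℕ → ℝ} {ξ : ℝ → ℕ → ℝ} {i : ℕ} {s t : ℝ}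

theorem continuousOn_xbar {S : Set ℝ} (hξ : ∀ j, ContinuousOn (fun t => ξ t j) S) :
    ContinuousOn (xbar N ξ) S :=
  continuousOn_const.mul (continuousOn_finsetSum _ fun j _ => hξ j)

theorem sum_Icc_eq_mul_xbar (N : ℕ) (ξ : ℝ → ℕ → ℝ) (s : ℝ) :
    ∑ j ∈ Finset.Icc 1 N, ξ s j = N * xbar N ξ s := by
  rcases N.eq_zero_or_pos with rfl | _
  · simp [xbar]
  · rw [xbar, mul_inv_cancel_left₀ (by positivity)]

theorem sum_velocity (x : ℝ) :
    ∑ i ∈ Finset.Icc 1 N, velocity N α ξ i x = -(∑ i ∈ Finset.Icc 1 N, α x i) * xbar N ξ x := by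
  simp only [velocity, Finset.sum_add_distrib, Finset.sum_neg_distrib, ← Finset.sum_mul,
    Finset.sum_sub_distrib, Finset.sum_const, Nat.card_Icc, add_tsub_cancel_right, nsmul_eq_mul,
    mul_one]
  rw [sum_Icc_eq_mul_xbar N ξ x]
  ring

theorem IsAdmissible.intervalIntegrable (hα : IsAdmissible N T M α) (hi : i ∈ Finset.Icc 1 N)
    (hs : s ∈ Set.Icc 0 T) (ht : t ∈ Set.Icc 0 T) :
    IntervalIntegrable (fun x => α x i) volume s t := by
  rw [intervalIntegrable_iff]
  refine Measure.integrableOn_of_bounded (M := 1) measure_Ioc_lt_top.ne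
    (hα.1 i).aestronglyMeasurable ?_
  filter_upwards [ae_restrict_mem measurableSet_uIoc] with x hx
  obtain ⟨h0, h1⟩ := hα.2.1 x (Set.uIcc_subset_Icc hs ht (Set.uIoc_subset_uIcc hx)) i hi
  rwa [Real.norm_eq_abs, abs_of_nonneg h0]

theorem IsAdmissible.intervalIntegrable_velocity (hα : IsAdmissible N T M α)
    (hξ : ∀ j, ContinuousOn (fun t => ξ t j) (Set.Icc 0 T)) (hi : i ∈ Finset.Icc 1 N)
    (hs : s ∈ Set.Icc 0 T) (ht : t ∈ Set.Icc 0 T) :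
    IntervalIntegrable (velocity N α ξ i) volume s t := by
  have hsub := Set.uIcc_subset_Icc hs ht
  exact ((hξ i).mono hsub).neg.intervalIntegrable.add
    ((intervalIntegrable_const.sub (hα.intervalIntegrable hi hs ht)).mul_continuousOn
      ((continuousOn_xbar hξ).mono hsub))

theorem IsTrajectory.sub_eq_integral_velocity (hα : IsAdmissible N T M α)
    (hξ : IsTrajectory N T α ξ0 ξ) (hi : i ∈ Finset.Icc 1 N)
    (hs : s ∈ Set.Icc 0 T) (ht : t ∈ Set.Icc 0 T) :
    ξ t i - ξ s i = ∫ x in s..t, velocity N α ξ i x := by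
  have h0 : (0 : ℝ) ∈ Set.Icc 0 T := ⟨le_rfl, hs.1.trans hs.2⟩
  rw [hξ.2 t ht i hi, hξ.2 s hs i hi, add_sub_add_left_eq_sub]
  exact intervalIntegral.integral_interval_sub_left
    (hα.intervalIntegrable_velocity hξ.1 hi h0 ht) (hα.intervalIntegrable_velocity hξ.1 hi h0 hs)

theorem IsTrajectory.xbar_sub_integral_posPart_le (hα : IsAdmissible N T M α)
    (hξ : IsTrajectory N T α ξ0 ξ) (hs : 0 ≤ s) (hst : s ≤ t) (ht : t ≤ T) :
    xbar N ξ s - M / N * ∫ x in s..t, max (xbar N ξ x) 0 ≤ xbar N ξ t := by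
  have hsI : s ∈ Set.Icc 0 T := ⟨hs, hst.trans ht⟩
  have htI : t ∈ Set.Icc 0 T := ⟨hs.trans hst, ht⟩
  have hsub := Set.uIcc_subset_Icc hsI htI
  have hxbar := (continuousOn_xbar (N := N) hξ.1).mono hsub
  have hdiff : xbar N ξ t - xbar N ξ s =
      (N : ℝ)⁻¹ * ∫ x in s..t, -(∑ i ∈ Finset.Icc 1 N, α x i) * xbar N ξ x := by
    rw [xbar, xbar, ← mul_sub, ← Finset.sum_sub_distrib,
      Finset.sum_congr rfl fun i hi => hξ.sub_eq_integral_velocity hα hi hsI htI,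
      ← intervalIntegral.integral_finsetSum fun i hi =>
        hα.intervalIntegrable_velocity hξ.1 hi hsI htI]
    simp only [sum_velocity]
  have hA_int : IntervalIntegrable (fun x => ∑ i ∈ Finset.Icc 1 N, α x i) volume s t := by
    simpa only [Finset.sum_fn] using
      IntervalIntegrable.sum _ fun i hi => hα.intervalIntegrable hi hsI htI
  have hbound : ∫ x in s..t, -(M * max (xbar N ξ x) 0) ≤
      ∫ x in s..t, -(∑ i ∈ Finset.Icc 1 N, α x i) * xbar N ξ x := by
    refine intervalIntegral.integral_mono_on hst
      (continuousOn_const.mul (hxbar.sup continuousOn_const)).neg.intervalIntegrable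
      (hA_int.neg.mul_continuousOn hxbar) fun x hx => ?_
    have hxI : x ∈ Set.Icc 0 T := ⟨hs.trans hx.1, hx.2.trans ht⟩
    have hA : 0 ≤ ∑ i ∈ Finset.Icc 1 N, α x i :=
      Finset.sum_nonneg fun i hi => (hα.2.1 x hxI i hi).1
    have hAM := hα.2.2 x hxI
    nlinarith [le_max_left (xbar N ξ x) 0, le_max_right (xbar N ξ x) 0,
      mul_le_mul_of_nonneg_left (le_max_left (xbar N ξ x) 0) hA]
  rw [intervalIntegral.integral_neg, intervalIntegral.integral_const_mul] at hbound
  have := mul_le_mul_of_nonneg_left hbound (by positivity : (0 : ℝ) ≤ (N : ℝ)⁻¹)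
  rw [div_eq_inv_mul]
  linarith

theorem IsTrajectory.sub_integral_posPart_le (hα : IsAdmissible N T M α)
    (hξ : IsTrajectory N T α ξ0 ξ) (hbar : ∀ x ∈ Set.Icc 0 T, 0 ≤ xbar N ξ x)
    (hi : i ∈ Finset.Icc 1 N) (hs : 0 ≤ s) (hst : s ≤ t) (ht : t ≤ T) :
    ξ s i - ∫ x in s..t, max (ξ x i) 0 ≤ ξ t i := by
  have hsI : s ∈ Set.Icc 0 T := ⟨hs, hst.trans ht⟩
  have htI : t ∈ Set.Icc 0 T := ⟨hs.trans hst, ht⟩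
  have hbound : ∫ x in s..t, -max (ξ x i) 0 ≤ ∫ x in s..t, velocity N α ξ i x := by
    refine intervalIntegral.integral_mono_on hst
      (((hξ.1 i).mono (Set.uIcc_subset_Icc hsI htI)).sup continuousOn_const).neg.intervalIntegrable
      (hα.intervalIntegrable_velocity hξ.1 hi hsI htI) fun x hx => ?_
    have hxI : x ∈ Set.Icc 0 T := ⟨hs.trans hx.1, hx.2.trans ht⟩
    have hα1 := (hα.2.1 x hxI i hi).2
    rw [velocity]
    nlinarith [le_max_left (ξ x i) 0, mul_nonneg (sub_nonneg.2 hα1) (hbar x hxI)]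
  rw [intervalIntegral.integral_neg, ← hξ.sub_eq_integral_velocity hα hi hsI htI] at hbound
  linarith

end Trajectory

theorem positivity_propagation_general
    (N : ℕ) (T M : ℝ) (hM : 0 < M)
    (α : ℝ → ℕ → ℝ) (ξ0 : ℕ → ℝ) (ξ : ℝ → ℕ → ℝ)
    (hα : IsAdmissible N T M α) (hξ : IsTrajectory N T α ξ0 ξ)
    (hbar0 : 0 < xbar N ξ 0) :
    (∀ t ∈ Set.Icc (0 : ℝ) T,
      Real.exp (-M * t / N) * xbar N ξ 0 ≤ xbar N ξ t ∧
      0 < Real.exp (-M * t / N) * xbar N ξ 0) ∧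
    (∀ τ ∈ Set.Icc (0 : ℝ) T, ∀ i ∈ Finset.Icc 1 N,
      (0 ≤ ξ τ i → ∀ t ∈ Set.Icc τ T, 0 ≤ ξ t i) ∧
      (0 < ξ τ i → ∀ t ∈ Set.Icc τ T, 0 < ξ t i)) := by
  have hmean : ∀ t ∈ Set.Icc (0 : ℝ) T, exp (-M * t / N) * xbar N ξ 0 ≤ xbar N ξ t := by
    intro t ht
    have := mul_exp_le_of_sub_integral_posPart_le (by positivity) (continuousOn_xbar hξ.1)
      hbar0.le (fun s t hs hst ht => hξ.xbar_sub_integral_posPart_le hα hs hst ht) t ht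
    rwa [mul_comm, sub_zero, ← neg_mul, ← neg_div, div_mul_eq_mul_div] at this
  have hbar : ∀ x ∈ Set.Icc (0 : ℝ) T, 0 ≤ xbar N ξ x :=
    fun x hx => (mul_pos (exp_pos _) hbar0).le.trans (hmean x hx)
  refine ⟨fun t ht => ⟨hmean t ht, mul_pos (exp_pos _) hbar0⟩, fun τ hτ i hi => ?_⟩
  have hcomp (hτi : 0 ≤ ξ τ i) : ∀ t ∈ Set.Icc τ T, ξ τ i * exp (-(1 * (t - τ))) ≤ ξ t i :=
    mul_exp_le_of_sub_integral_posPart_le zero_le_one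
      ((hξ.1 i).mono (Set.Icc_subset_Icc_left hτ.1)) hτi fun s t hs hst ht => by
        simpa only [one_mul] using hξ.sub_integral_posPart_le hα hbar hi (hτ.1.trans hs) hst ht
  exact ⟨fun h t ht => (mul_nonneg h (exp_pos _).le).trans (hcomp h t ht),
    fun h t ht => (mul_pos h (exp_pos _)).trans_le (hcomp h.le t ht)⟩

/-- If `ξ̄(0) > 0`, then `ξ̄(t) ≥ e^{−Mt/N} ξ̄(0) > 0` on `[0,T]`; moreover nonnegativity
(resp. positivity) of a component `ξ_i` at a time `τ` propagates to all of `[τ,T]`. -/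
theorem positivity_propagation
    (N : ℕ) (hN : 1 ≤ N) (T M : ℝ) (hT : 0 < T) (hM : 0 < M)
    (α : ℝ → ℕ → ℝ) (ξ0 : ℕ → ℝ) (ξ : ℝ → ℕ → ℝ)
    (hα : IsAdmissible N T M α) (hξ : IsTrajectory N T α ξ0 ξ)
    (hbar0 : 0 < xbar N ξ 0) :
    (∀ t ∈ Set.Icc (0 : ℝ) T,
      Real.exp (-M * t / N) * xbar N ξ 0 ≤ xbar N ξ t ∧
      0 < Real.exp (-M * t / N) * xbar N ξ 0) ∧
    (∀ τ ∈ Set.Icc (0 : ℝ) T, ∀ i ∈ Finset.Icc 1 N,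
      (0 ≤ ξ τ i → ∀ t ∈ Set.Icc τ T, 0 ≤ ξ t i) ∧
      (0 < ξ τ i → ∀ t ∈ Set.Icc τ T, 0 < ξ t i)) :=
  positivity_propagation_general N T M hM α ξ0 ξ hα hξ hbar0

end
end

section
/- Suppose v̄(0) ≠ 0 and set e = v̄(0)/‖v̄(0)‖. Then for every t ∈ [0,T], v̄(t) is a nonnegative scalar multiple of v̄(0) (in fact a positive multiple), and for every i the orthogonal component w_i(t) := v_i(t) − ⟨v_i(t), e⟩ e satisfies w_i(t) = e^{−t} w_i(0); in particular ‖w_i(t)‖ = e^{−t} ‖w_i(0)‖ decays exponentially, independently of the controls. -/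
/-!
Averaging the equations shows that the mean velocity solves the scalar linear equation
`v̄' = -ᾱ v̄`, where `ᾱ ∈ [0, 1]` is the mean control. Solutions of such an equation stay on the
ray through their initial value: the component orthogonal to `v̄(0)` solves the same homogeneous
equation from `0` and vanishes by Grönwall, while the component along `v̄(0)` cannot reach `0`,
since by backward uniqueness it would then vanish at time `0`. Hence `v̄(t)` lies in the kernel of
the projection `w ↦ w - ⟪w, e⟫ e`, and applying this projection to the equation of `v_i` leaves
`w_i' = -w_i`.
-/

open MeasureTheory Real Set Filter Topology intervalIntegral
open scoped RealInnerProductSpace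

theorem eq_zero_of_le_mul_integral {f : ℝ → ℝ} {a b K : ℝ} (hf : ContinuousOn f (Icc a b))
    (hf0 : ∀ t ∈ Icc a b, 0 ≤ f t) (hle : ∀ t ∈ Icc a b, f t ≤ K * ∫ s in a..t, f s) :
    ∀ t ∈ Icc a b, f t = 0 := by
  intro t ht
  set F : ℝ → ℝ := fun u => ∫ s in a..u, f s
  have hF0 : ∀ t ∈ Icc a b, 0 ≤ F t := fun t ht =>
    integral_nonneg ht.1 fun s hs => hf0 s ⟨hs.1, hs.2.trans ht.2⟩
  have hint : ∀ t ∈ Icc a b, IntervalIntegrable f volume a t := fun t ht =>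
    (hf.mono (Icc_subset_Icc_right ht.2)).intervalIntegrable_of_Icc ht.1
  have hFcont : ContinuousOn F (Icc a b) := by
    rw [← uIcc_of_le (ht.1.trans ht.2)] at hf ⊢
    exact continuousOn_primitive_interval hf.integrableOn_Icc
  have hF' : ∀ x ∈ Ico a b, HasDerivWithinAt F (f x) (Ici x) x := by
    intro x hx
    have hmem : Icc a b ∈ 𝓝[>] x := Icc_mem_nhdsGT_of_mem hx
    refine integral_hasDerivWithinAt_right (t := Ioi x) (hint x (Ico_subset_Icc_self hx)) ?_ ?_
    · exact (hf.stronglyMeasurableAtFilter_nhdsWithin measurableSet_Icc x).filter_mono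
        (nhdsWithin_le_of_mem hmem)
    · exact (hf x (Ico_subset_Icc_self hx)).mono_of_mem_nhdsWithin hmem
  have hFzero := eq_zero_of_abs_deriv_le_mul_abs_self_of_eq_zero_right hFcont hF'
    integral_same fun x hx => by
      rw [Real.norm_of_nonneg (hf0 x (Ico_subset_Icc_self hx)),
        Real.norm_of_nonneg (hF0 x (Ico_subset_Icc_self hx))]
      exact hle x (Ico_subset_Icc_self hx)
  refine le_antisymm ?_ (hf0 t ht)
  simpa [F, hFzero t ht] using hle t ht

variable {E F : Type*} [NormedAddCommGroup E] [NormedSpace ℝ E] [NormedAddCommGroup F]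
  [NormedSpace ℝ F]

theorem eq_zero_of_eq_integral_smul {c : ℝ → ℝ} {z : ℝ → E} {a b K : ℝ}
    (hz : ContinuousOn z (Icc a b)) (hcK : ∀ s ∈ Icc a b, |c s| ≤ K)
    (heq : ∀ t ∈ Icc a b, z t = ∫ s in a..t, c s • z s) : ∀ t ∈ Icc a b, z t = 0 := by
  have hnorm := eq_zero_of_le_mul_integral (K := K) hz.norm (fun _ _ => norm_nonneg _) ?_
  · exact fun t ht => norm_eq_zero.mp (hnorm t ht)
  intro t ht
  have hint : IntervalIntegrable (fun s => ‖z s‖) volume a t :=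
    (hz.norm.mono (Icc_subset_Icc_right ht.2)).intervalIntegrable_of_Icc ht.1
  rw [heq t ht, ← intervalIntegral.integral_const_mul]
  refine norm_integral_le_of_norm_le ht.1 (ae_of_all _ fun s hs => ?_) (hint.const_mul K)
  rw [norm_smul, Real.norm_eq_abs]
  exact mul_le_mul_of_nonneg_right (hcK s ⟨hs.1.le, hs.2.trans ht.2⟩) (norm_nonneg _)

theorem intervalIntegrable_smul_of_abs_le {c : ℝ → ℝ} {g : ℝ → E} {a b K : ℝ} (hab : a ≤ b)
    (hc : Measurable c) (hcK : ∀ s ∈ Icc a b, |c s| ≤ K) (hg : ContinuousOn g (Icc a b)) :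
    IntervalIntegrable (fun s => c s • g s) volume a b := by
  rw [intervalIntegrable_iff_integrableOn_Icc_of_le hab]
  refine IntegrableOn.smul_continuousOn ?_ hg isCompact_Icc
  refine Measure.integrableOn_of_bounded (M := K) measure_Icc_lt_top.ne hc.aestronglyMeasurable ?_
  filter_upwards [ae_restrict_mem measurableSet_Icc] with s hs
  exact hcK s hs

/-- The linear equation `x' = c • x` on `[a, b]` in integral form, which makes sense for merely
measurable `c`. -/
structure IsLinearIntegralSolution (c : ℝ → ℝ) (a b : ℝ) (x : ℝ → E) : Prop where
  continuousOn : ContinuousOn x (Icc a b)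
  integral_eq : ∀ t ∈ Icc a b, x t = x a + ∫ s in a..t, c s • x s

namespace IsLinearIntegralSolution

variable {c : ℝ → ℝ} {a b K : ℝ} {x y : ℝ → E}

theorem intervalIntegrable (hc : Measurable c) (hcK : ∀ s ∈ Icc a b, |c s| ≤ K)
    (hx : IsLinearIntegralSolution c a b x) {t : ℝ} (ht : t ∈ Icc a b) :
    IntervalIntegrable (fun s => c s • x s) volume a t :=
  intervalIntegrable_smul_of_abs_le ht.1 hc (fun s hs => hcK s ⟨hs.1, hs.2.trans ht.2⟩)
    (hx.continuousOn.mono (Icc_subset_Icc_right ht.2))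

theorem mono_right (hx : IsLinearIntegralSolution c a b x) {b' : ℝ} (hb : b' ≤ b) :
    IsLinearIntegralSolution c a b' x :=
  ⟨hx.continuousOn.mono (Icc_subset_Icc_right hb),
    fun t ht => hx.integral_eq t ⟨ht.1, ht.2.trans hb⟩⟩

theorem map [CompleteSpace E] [CompleteSpace F] (hc : Measurable c)
    (hcK : ∀ s ∈ Icc a b, |c s| ≤ K) (hx : IsLinearIntegralSolution c a b x) (L : E →L[ℝ] F) :
    IsLinearIntegralSolution c a b (fun t => L (x t)) := by
  refine ⟨L.continuous.comp_continuousOn hx.continuousOn, fun t ht => ?_⟩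
  rw [hx.integral_eq t ht, map_add,
    ← L.intervalIntegral_comp_comm (hx.intervalIntegrable hc hcK ht)]
  simp only [map_smul]

theorem sub (hc : Measurable c) (hcK : ∀ s ∈ Icc a b, |c s| ≤ K)
    (hx : IsLinearIntegralSolution c a b x) (hy : IsLinearIntegralSolution c a b y) :
    IsLinearIntegralSolution c a b (fun t => x t - y t) := by
  refine ⟨hx.continuousOn.sub hy.continuousOn, fun t ht => ?_⟩
  rw [hx.integral_eq t ht, hy.integral_eq t ht]
  simp only [smul_sub]
  rw [integral_sub (hx.intervalIntegrable hc hcK ht) (hy.intervalIntegrable hc hcK ht)]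
  abel

theorem eq_zero_of_left (hcK : ∀ s ∈ Icc a b, |c s| ≤ K)
    (hx : IsLinearIntegralSolution c a b x) (ha : x a = 0) : ∀ t ∈ Icc a b, x t = 0 :=
  eq_zero_of_eq_integral_smul hx.continuousOn hcK fun t ht => by
    simpa [ha] using hx.integral_eq t ht

theorem eqOn_of_left (hc : Measurable c) (hcK : ∀ s ∈ Icc a b, |c s| ≤ K)
    (hx : IsLinearIntegralSolution c a b x) (hy : IsLinearIntegralSolution c a b y)
    (ha : x a = y a) : ∀ t ∈ Icc a b, x t = y t := fun t ht =>
  sub_eq_zero.mp <| (hx.sub hc hcK hy).eq_zero_of_left hcK (sub_eq_zero.mpr ha) t ht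

/-- Backward uniqueness: the time reversal `s ↦ x (a + b - s)` solves the homogeneous equation
with coefficient `s ↦ -c (a + b - s)`. -/
theorem eq_zero_of_right (hc : Measurable c) (hcK : ∀ s ∈ Icc a b, |c s| ≤ K)
    (hx : IsLinearIntegralSolution c a b x) (hb : x b = 0) : ∀ t ∈ Icc a b, x t = 0 := by
  have hrefl : ∀ t ∈ Icc a b, a + b - t ∈ Icc a b := fun t ht =>
    ⟨by linarith [ht.2], by linarith [ht.1]⟩
  have hzero := eq_zero_of_eq_integral_smul (c := fun s => -c (a + b - s)) (K := K)
    (z := fun s => x (a + b - s)) (hx.continuousOn.comp (by fun_prop) hrefl)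
    (fun s hs => by simpa using hcK _ (hrefl s hs)) fun t ht => by
      have hsplit := integral_interval_sub_left (hx.intervalIntegrable hc hcK (right_mem_Icc.mpr
        (ht.1.trans ht.2))) (hx.intervalIntegrable hc hcK (hrefl t ht))
      have hxb := hx.integral_eq b (right_mem_Icc.mpr (ht.1.trans ht.2))
      have hxt := hx.integral_eq _ (hrefl t ht)
      have hsubst := intervalIntegral.integral_comp_sub_left (fun s => c s • x s) (a + b) (a := a)
        (b := t)
      simp only [add_sub_cancel_left] at hsubst
      simp only [neg_smul, intervalIntegral.integral_neg, hsubst, ← hsplit]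
      rw [hb] at hxb
      linear_combination (norm := module) hxt - hxb
  intro t ht
  simpa using hzero (a + b - t) (hrefl t ht)

theorem pos {p : ℝ → ℝ} (hc : Measurable c) (hcK : ∀ s ∈ Icc a b, |c s| ≤ K)
    (hp : IsLinearIntegralSolution c a b p) (ha : 0 < p a) : ∀ t ∈ Icc a b, 0 < p t := by
  intro t ht
  by_contra! hpt
  obtain ⟨t₀, ht₀, hzero⟩ := intermediate_value_Icc' ht.1
    (hp.continuousOn.mono (Icc_subset_Icc_right ht.2)) ⟨hpt, ha.le⟩
  have ht₀b : t₀ ≤ b := ht₀.2.trans ht.2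
  exact ha.ne' <| (hp.mono_right ht₀b).eq_zero_of_right hc
    (fun s hs => hcK s ⟨hs.1, hs.2.trans ht₀b⟩) hzero a (left_mem_Icc.mpr ht₀.1)

theorem exp_smul [CompleteSpace E] (k a b : ℝ) (x₀ : E) :
    IsLinearIntegralSolution (fun _ => k) a b (fun t => exp (k * (t - a)) • x₀) := by
  refine ⟨by fun_prop, fun t _ => ?_⟩
  have hderiv : ∀ s ∈ uIcc a t,
      HasDerivAt (fun s => exp (k * (s - a))) (k * exp (k * (s - a))) s :=
    fun s _ => by simpa [mul_comm] using ((hasDerivAt_id s).sub_const a |>.const_mul k).exp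
  have hint : IntervalIntegrable (fun s => k * exp (k * (s - a))) volume a t :=
    (by fun_prop : Continuous fun s => k * exp (k * (s - a))).intervalIntegrable a t
  simp only [smul_smul]
  rw [intervalIntegral.integral_smul_const, integral_eq_sub_of_hasDerivAt hderiv hint]
  simp [sub_smul]

theorem eq_exp_smul [CompleteSpace E] {k : ℝ}
    (hx : IsLinearIntegralSolution (fun _ => k) a b x) :
    ∀ t ∈ Icc a b, x t = exp (k * (t - a)) • x a :=
  hx.eqOn_of_left measurable_const (fun _ _ => le_rfl) (exp_smul k a b (x a)) (by simp)

section InnerProductSpace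

variable {G : Type*} [NormedAddCommGroup G] [InnerProductSpace ℝ G] [CompleteSpace G]
  {x : ℝ → G}

theorem exists_pos_smul (hc : Measurable c) (hcK : ∀ s ∈ Icc a b, |c s| ≤ K)
    (hx : IsLinearIntegralSolution c a b x) :
    ∀ t ∈ Icc a b, ∃ r : ℝ, 0 < r ∧ x t = r • x a := by
  intro t ht
  by_cases h0 : x a = 0
  · exact ⟨1, one_pos, by rw [hx.eq_zero_of_left hcK h0 t ht, h0, smul_zero]⟩
  set u := x a
  have hu : 0 < ‖u‖ ^ 2 := by positivity
  -- `P` vanishes on `u`, so `P ∘ x ≡ 0` puts `x t` on the line through `u`, and the positivity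
  -- of `⟪u, x t⟫` selects the ray.
  let P : G →L[ℝ] G := ‖u‖ ^ 2 • ContinuousLinearMap.id ℝ G - (innerSL ℝ u).smulRight u
  have hP : ∀ y, P y = ‖u‖ ^ 2 • y - ⟪u, y⟫ • u := fun y => rfl
  have hPx := (hx.map hc hcK P).eq_zero_of_left hcK
    (by rw [hP, real_inner_self_eq_norm_sq, sub_self]) t ht
  have hpos := (hx.map hc hcK (innerSL ℝ u)).pos hc hcK
    (by rwa [innerSL_apply_apply, real_inner_self_eq_norm_sq]) t ht
  rw [innerSL_apply_apply] at hpos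
  rw [hP, sub_eq_zero] at hPx
  exact ⟨⟪u, x t⟫ / ‖u‖ ^ 2, div_pos hpos hu, by
    rw [div_eq_inv_mul, mul_smul, ← hPx, inv_smul_smul₀ hu.ne']⟩

end InnerProductSpace

end IsLinearIntegralSolution

theorem sub_inner_normalize_smul_normalize_self {G : Type*} [NormedAddCommGroup G]
    [InnerProductSpace ℝ G] (u : G) :
    u - ⟪u, NormedSpace.normalize u⟫ • NormedSpace.normalize u = 0 := by
  have hinner : ⟪u, NormedSpace.normalize u⟫ = ‖u‖ := by
    rw [NormedSpace.normalize, real_inner_smul_right, real_inner_self_eq_norm_sq, inv_mul_eq_div,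
      sq, mul_self_div_self]
  rw [hinner, NormedSpace.norm_smul_normalize, sub_self]

section Alignment

variable {ι : Type*}

noncomputable def mean (s : Finset ι) (u : ι → E) : E := (s.card : ℝ)⁻¹ • ∑ i ∈ s, u i

theorem mean_drift_eq (s : Finset ι) (α : ι → ℝ) (u : ι → E) :
    mean s (fun i => -u i + (1 - α i) • mean s u) = -mean s α • mean s u := by
  have hn : (s.card : ℝ)⁻¹ * s.card * (s.card : ℝ)⁻¹ = (s.card : ℝ)⁻¹ := by
    simpa using mul_inv_mul_cancel (s.card : ℝ)⁻¹
  simp only [mean, Finset.sum_add_distrib, Finset.sum_neg_distrib, ← Finset.sum_smul,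
    Finset.sum_sub_distrib, Finset.sum_const, nsmul_eq_mul, mul_one, smul_eq_mul]
  linear_combination (norm := module) hn • ∑ i ∈ s, u i

theorem mean_mem_Icc_zero_one {s : Finset ι} {α : ι → ℝ} (hα : ∀ i ∈ s, α i ∈ Icc 0 1) :
    mean s α ∈ Icc 0 1 := by
  have hsum : ∑ i ∈ s, α i ≤ s.card := by
    simpa using Finset.sum_le_card_nsmul s α 1 fun i hi => (hα i hi).2
  exact ⟨smul_nonneg (by positivity) (Finset.sum_nonneg fun i hi => (hα i hi).1),
    inv_mul_le_one_of_le₀ hsum (by positivity)⟩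

structure IsAlignmentSolution (s : Finset ι) (α : ℝ → ι → ℝ) (v : ℝ → ι → E) (a b : ℝ) :
    Prop where
  measurable_control : ∀ i ∈ s, Measurable fun t => α t i
  control_mem_Icc : ∀ t ∈ Icc a b, ∀ i ∈ s, α t i ∈ Icc 0 1
  continuousOn : ∀ i ∈ s, ContinuousOn (fun t => v t i) (Icc a b)
  integral_eq : ∀ t ∈ Icc a b, ∀ i ∈ s,
    v t i = v a i + ∫ τ in a..t, (-v τ i + (1 - α τ i) • mean s (v τ))

namespace IsAlignmentSolution

variable {s : Finset ι} {α : ℝ → ι → ℝ} {v : ℝ → ι → E} {a b : ℝ}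

theorem measurable_mean_control (h : IsAlignmentSolution s α v a b) :
    Measurable fun t => mean s (α t) :=
  (Finset.measurable_sum s fun i hi => h.measurable_control i hi).const_mul _

theorem abs_neg_mean_control_le (h : IsAlignmentSolution s α v a b) :
    ∀ t ∈ Icc a b, |-mean s (α t)| ≤ 1 := fun t ht => by
  have hm := mean_mem_Icc_zero_one (h.control_mem_Icc t ht)
  rw [abs_neg, abs_of_nonneg hm.1]
  exact hm.2

theorem continuousOn_mean (h : IsAlignmentSolution s α v a b) :
    ContinuousOn (fun t => mean s (v t)) (Icc a b) :=
  (continuousOn_finsetSum s fun i hi => h.continuousOn i hi).const_smul _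

theorem intervalIntegrable_drift (h : IsAlignmentSolution s α v a b) {t : ℝ} (ht : t ∈ Icc a b)
    {i : ι} (hi : i ∈ s) :
    IntervalIntegrable (fun τ => -v τ i + (1 - α τ i) • mean s (v τ)) volume a t := by
  have hsub : Icc a t ⊆ Icc a b := Icc_subset_Icc_right ht.2
  refine (((h.continuousOn i hi).mono hsub).intervalIntegrable_of_Icc ht.1).neg.add ?_
  refine intervalIntegrable_smul_of_abs_le (K := 1) ht.1
    (measurable_const.sub (h.measurable_control i hi)) (fun τ hτ => ?_)
    (h.continuousOn_mean.mono hsub)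
  have hατ := h.control_mem_Icc τ (hsub hτ) i hi
  rw [abs_le]
  constructor <;> linarith [hατ.1, hατ.2]

theorem isLinearIntegralSolution_mean (h : IsAlignmentSolution s α v a b) :
    IsLinearIntegralSolution (fun t => -mean s (α t)) a b (fun t => mean s (v t)) := by
  refine ⟨h.continuousOn_mean, fun t ht => ?_⟩
  have hsum : mean s (v t) = mean s (v a) +
      mean s (fun i => ∫ τ in a..t, (-v τ i + (1 - α τ i) • mean s (v τ))) := by
    simp only [mean, ← smul_add, ← Finset.sum_add_distrib]
    exact congrArg _ (Finset.sum_congr rfl fun i hi => h.integral_eq t ht i hi)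
  rw [hsum]
  congr 1
  change (s.card : ℝ)⁻¹ • ∑ i ∈ s, _ = _
  rw [← intervalIntegral.integral_finsetSum (fun i hi => h.intervalIntegrable_drift ht hi),
    ← intervalIntegral.integral_smul]
  exact intervalIntegral.integral_congr fun τ _ => mean_drift_eq s (α τ) (v τ)

theorem isLinearIntegralSolution_map_of_map_mean_eq_zero [CompleteSpace E] [CompleteSpace F]
    (h : IsAlignmentSolution s α v a b) (L : E →L[ℝ] F)
    (hL : ∀ t ∈ Icc a b, L (mean s (v t)) = 0) {i : ι} (hi : i ∈ s) :
    IsLinearIntegralSolution (fun _ => -1) a b (fun t => L (v t i)) := by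
  refine ⟨L.continuous.comp_continuousOn (h.continuousOn i hi), fun t ht => ?_⟩
  rw [h.integral_eq t ht i hi, map_add,
    ← L.intervalIntegral_comp_comm (h.intervalIntegrable_drift ht hi)]
  refine congrArg _ (intervalIntegral.integral_congr fun τ hτ => ?_)
  rw [uIcc_of_le ht.1] at hτ
  simp [hL τ ⟨hτ.1, hτ.2.trans ht.2⟩]

theorem exists_pos_smul_mean {G : Type*} [NormedAddCommGroup G] [InnerProductSpace ℝ G]
    [CompleteSpace G] {v : ℝ → ι → G} (h : IsAlignmentSolution s α v a b) :
    ∀ t ∈ Icc a b, ∃ r : ℝ, 0 < r ∧ mean s (v t) = r • mean s (v a) :=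
  h.isLinearIntegralSolution_mean.exists_pos_smul h.measurable_mean_control.neg
    h.abs_neg_mean_control_le

end IsAlignmentSolution

end Alignment

theorem orthogonal_component_decay_general
    (N d : ℕ) (T : ℝ)
    (α : ℝ → ℕ → ℝ)
    (hmeas : ∀ i, Measurable fun t => α t i)
    (hrange : ∀ t ∈ Set.Icc (0 : ℝ) T, ∀ i ∈ Finset.Icc 1 N, 0 ≤ α t i ∧ α t i ≤ 1)
    (v : ℝ → ℕ → EuclideanSpace ℝ (Fin d))
    (hcont : ∀ i, ContinuousOn (fun t => v t i) (Set.Icc 0 T))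
    (hv : ∀ t ∈ Set.Icc (0 : ℝ) T, ∀ i ∈ Finset.Icc 1 N,
      v t i = v 0 i + ∫ s in (0 : ℝ)..t,
        (-(v s i) + (1 - α s i) • ((N : ℝ)⁻¹ • ∑ j ∈ Finset.Icc 1 N, v s j)))
    (e : EuclideanSpace ℝ (Fin d))
    (he : e = ‖(N : ℝ)⁻¹ • ∑ j ∈ Finset.Icc 1 N, v 0 j‖⁻¹ •
        ((N : ℝ)⁻¹ • ∑ j ∈ Finset.Icc 1 N, v 0 j)) :
    ∀ t ∈ Set.Icc (0 : ℝ) T,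
      (∃ c : ℝ, 0 < c ∧
        ((N : ℝ)⁻¹ • ∑ j ∈ Finset.Icc 1 N, v t j) =
          c • ((N : ℝ)⁻¹ • ∑ j ∈ Finset.Icc 1 N, v 0 j)) ∧
      ∀ i ∈ Finset.Icc 1 N,
        (v t i - ⟪v t i, e⟫ • e) = Real.exp (-t) • (v 0 i - ⟪v 0 i, e⟫ • e) ∧
        ‖v t i - ⟪v t i, e⟫ • e‖ = Real.exp (-t) * ‖v 0 i - ⟪v 0 i, e⟫ • e‖ := by
  have hcard : ((Finset.Icc 1 N).card : ℝ) = N := by simp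
  have hsol : IsAlignmentSolution (Finset.Icc 1 N) α v 0 T :=
    ⟨fun i _ => hmeas i, hrange, fun i _ => hcont i, by simpa only [mean, hcard] using hv⟩
  have he' : e = NormedSpace.normalize (mean (Finset.Icc 1 N) (v 0)) := by
    simpa only [mean, hcard, NormedSpace.normalize] using he
  let P : EuclideanSpace ℝ (Fin d) →L[ℝ] EuclideanSpace ℝ (Fin d) :=
    ContinuousLinearMap.id ℝ _ - (innerSL ℝ e).smulRight e
  have hP : ∀ x, P x = x - ⟪x, e⟫ • e := fun x => by simp [P, real_inner_comm]
  have hPmean : ∀ t ∈ Icc 0 T, P (mean (Finset.Icc 1 N) (v t)) = 0 := fun t ht => by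
    obtain ⟨r, -, hr⟩ := hsol.exists_pos_smul_mean t ht
    rw [hr, map_smul, hP, he', sub_inner_normalize_smul_normalize_self, smul_zero]
  intro t ht
  refine ⟨by simpa only [mean, hcard] using hsol.exists_pos_smul_mean t ht, fun i hi => ?_⟩
  have hdecay :=
    (hsol.isLinearIntegralSolution_map_of_map_mean_eq_zero P hPmean hi).eq_exp_smul t ht
  simp only [hP, neg_one_mul, sub_zero] at hdecay
  exact ⟨hdecay, by rw [hdecay, norm_smul, norm_of_nonneg (exp_pos _).le]⟩

/-- Along any admissible control, the mean velocity stays a positive multiple of `v̄(0)`,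
and the component of each `v_i` orthogonal to `e = v̄(0)/‖v̄(0)‖` decays as `e^{−t}`,
independently of the controls. -/
theorem orthogonal_component_decay
    (N d : ℕ) (hN : 1 ≤ N) (hd : 1 ≤ d) (T M : ℝ) (hT : 0 < T) (hM : 0 < M)
    (α : ℝ → ℕ → ℝ)
    (hmeas : ∀ i, Measurable fun t => α t i)
    (hrange : ∀ t ∈ Set.Icc (0 : ℝ) T, ∀ i ∈ Finset.Icc 1 N, 0 ≤ α t i ∧ α t i ≤ 1)
    (hsum : ∀ t ∈ Set.Icc (0 : ℝ) T, ∑ i ∈ Finset.Icc 1 N, α t i ≤ M)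
    (v : ℝ → ℕ → EuclideanSpace ℝ (Fin d))
    (hcont : ∀ i, ContinuousOn (fun t => v t i) (Set.Icc 0 T))
    (hv : ∀ t ∈ Set.Icc (0 : ℝ) T, ∀ i ∈ Finset.Icc 1 N,
      v t i = v 0 i + ∫ s in (0 : ℝ)..t,
        (-(v s i) + (1 - α s i) • ((N : ℝ)⁻¹ • ∑ j ∈ Finset.Icc 1 N, v s j)))
    (hv0 : ((N : ℝ)⁻¹ • ∑ j ∈ Finset.Icc 1 N, v 0 j) ≠ 0)
    (e : EuclideanSpace ℝ (Fin d))
    (he : e = ‖(N : ℝ)⁻¹ • ∑ j ∈ Finset.Icc 1 N, v 0 j‖⁻¹ •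
        ((N : ℝ)⁻¹ • ∑ j ∈ Finset.Icc 1 N, v 0 j)) :
    ∀ t ∈ Set.Icc (0 : ℝ) T,
      (∃ c : ℝ, 0 < c ∧
        ((N : ℝ)⁻¹ • ∑ j ∈ Finset.Icc 1 N, v t j) =
          c • ((N : ℝ)⁻¹ • ∑ j ∈ Finset.Icc 1 N, v 0 j)) ∧
      ∀ i ∈ Finset.Icc 1 N,
        (v t i - ⟪v t i, e⟫ • e) = Real.exp (-t) • (v 0 i - ⟪v 0 i, e⟫ • e) ∧
        ‖v t i - ⟪v t i, e⟫ • e‖ = Real.exp (-t) * ‖v 0 i - ⟪v 0 i, e⟫ • e‖ :=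
  orthogonal_component_decay_general N d T α hmeas hrange v hcont hv e he
end

section
/- Let ξ ∈ ℝ^N with ξ_1 ≥ ξ_2 ≥ … ≥ ξ_N, let M > 0 with M < N, let I⁺ = {i : ξ_i > 0}, and suppose |I⁺| > M and ξ_{⌈M−1⌉} > ξ_{⌈M⌉} > ξ_{⌈M+1⌉}. Then the vector α* defined by α*_i = 1 for i ≤ ⌊M⌋, α*_{⌊M⌋+1} = M − ⌊M⌋, and α*_i = 0 for i > ⌊M⌋+1 belongs to K = {α ∈ [0,1]^N : ∑_{i=1}^N α_i ≤ M} and minimizes the linear functional α ↦ ∑_{i=1}^N (1 − α_i) ξ_i over K. -/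
/-!
The objective is `∑ ξ_i - ∑ α_i ξ_i`, so one maximizes `∑ α_i ξ_i` over `K`: the greedy
choice fills the budget `M` on the largest entries. With the threshold `t = ξ_{⌊M⌋+1}` the
greedy vector satisfies `(α*_i - β_i)(ξ_i - t) ≥ 0` for every `β ∈ K`, since `α*_i = 1` where
`ξ_i ≥ t` and `α*_i = 0` where `ξ_i ≤ t` apart from the index of the threshold itself.
Summing, `∑ (α*_i - β_i) ξ_i ≥ t (∑ α*_i - ∑ β_i) = t (M - ∑ β_i) ≥ 0`, and `t > 0` because
more than `M` entries are positive.
-/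

open Finset

theorem sum_one_sub_mul_le_of_threshold {ι : Type*} (s : Finset ι) (a b ξ : ι → ℝ) {t : ℝ}
    (ht : 0 ≤ t) (hab : ∑ i ∈ s, b i ≤ ∑ i ∈ s, a i)
    (hexchange : ∀ i ∈ s, 0 ≤ (a i - b i) * (ξ i - t)) :
    ∑ i ∈ s, (1 - a i) * ξ i ≤ ∑ i ∈ s, (1 - b i) * ξ i := by
  have hsplit : ∑ i ∈ s, (1 - b i) * ξ i - ∑ i ∈ s, (1 - a i) * ξ i =
      ∑ i ∈ s, (a i - b i) * (ξ i - t) + (∑ i ∈ s, a i - ∑ i ∈ s, b i) * t := by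
    simp only [sub_mul, mul_sub, one_mul, sum_sub_distrib, sum_mul]
    ring
  rw [← sub_nonneg, hsplit]
  exact add_nonneg (sum_nonneg hexchange) (mul_nonneg (sub_nonneg.mpr hab) ht)

theorem pos_of_lt_card_filter_pos {N k : ℕ} {ξ : ℕ → ℝ}
    (hξ : AntitoneOn ξ (Icc 1 N : Set ℕ)) (hk : k < #{i ∈ Icc 1 N | 0 < ξ i}) :
    0 < ξ (k + 1) := by
  by_contra! hnonpos
  have hsub : {i ∈ Icc 1 N | 0 < ξ i} ⊆ Icc 1 k := by
    intro i hi
    obtain ⟨hiN, hpos⟩ := mem_filter.mp hi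
    refine mem_Icc.mpr ⟨(mem_Icc.mp hiN).1, ?_⟩
    by_contra! hki
    have hkN : k + 1 ∈ Icc 1 N := mem_Icc.mpr ⟨by omega, hki.trans_le (mem_Icc.mp hiN).2⟩
    linarith [hξ (mem_coe.mpr hkN) (mem_coe.mpr hiN) hki]
  have := card_le_card hsub
  simp only [Nat.card_Icc, add_tsub_cancel_right] at this
  omega

noncomputable def greedyControl (M : ℝ) (i : ℕ) : ℝ :=
  if i ≤ ⌊M⌋₊ then 1 else if i = ⌊M⌋₊ + 1 then M - ⌊M⌋₊ else 0

section greedyControl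

variable {M : ℝ}

theorem greedyControl_of_le_floor {i : ℕ} (hi : i ≤ ⌊M⌋₊) : greedyControl M i = 1 := if_pos hi

theorem greedyControl_floor_add_one : greedyControl M (⌊M⌋₊ + 1) = M - ⌊M⌋₊ := by
  simp [greedyControl]

theorem greedyControl_of_floor_add_one_lt {i : ℕ} (hi : ⌊M⌋₊ + 1 < i) : greedyControl M i = 0 := by
  simp only [greedyControl]
  rw [if_neg (by omega), if_neg (by omega)]

theorem greedyControl_mem_Icc (hM : 0 ≤ M) (i : ℕ) :
    0 ≤ greedyControl M i ∧ greedyControl M i ≤ 1 := by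
  have := Nat.floor_le hM
  have := Nat.lt_floor_add_one M
  unfold greedyControl
  split_ifs <;> constructor <;> linarith

theorem sum_Icc_greedyControl {N : ℕ} (hN : ⌊M⌋₊ < N) :
    ∑ i ∈ Icc 1 N, greedyControl M i = M := by
  set m := ⌊M⌋₊
  rw [show Icc 1 N = Ioc 0 N from Icc_succ_left_eq_Ioc 0 N, ← sum_Ioc_consecutive _ (Nat.zero_le (m + 1)) hN,
    ← sum_Ioc_consecutive _ (Nat.zero_le m) m.le_succ, Nat.Ioc_succ_singleton, sum_singleton,
    greedyControl_floor_add_one,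
    sum_congr rfl fun i hi => greedyControl_of_le_floor (mem_Ioc.mp hi).2,
    sum_eq_zero fun i hi => greedyControl_of_floor_add_one_lt (mem_Ioc.mp hi).1]
  simp

theorem greedyControl_exchange {N : ℕ} {ξ : ℕ → ℝ} (hξ : AntitoneOn ξ (Icc 1 N : Set ℕ))
    (hN : ⌊M⌋₊ < N) {i : ℕ} (hi : i ∈ Icc 1 N) {b : ℝ} (hb : 0 ≤ b ∧ b ≤ 1) :
    0 ≤ (greedyControl M i - b) * (ξ i - ξ (⌊M⌋₊ + 1)) := by
  have hmN : ⌊M⌋₊ + 1 ∈ (Icc 1 N : Set ℕ) := mem_Icc.mpr ⟨by omega, hN⟩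
  rcases lt_trichotomy i (⌊M⌋₊ + 1) with hlt | rfl | hgt
  · rw [greedyControl_of_le_floor (by omega)]
    exact mul_nonneg (by linarith) (sub_nonneg.mpr (hξ hi hmN hlt.le))
  · simp
  · rw [greedyControl_of_floor_add_one_lt hgt]
    exact mul_nonneg_of_nonpos_of_nonpos (by linarith) (sub_nonpos.mpr (hξ hmN hi hgt.le))

end greedyControl

theorem instantaneous_decrease_large_Iplus_general
    (N : ℕ) (M : ℝ) (hM : 0 < M) (ξ : ℕ → ℝ)
    (horder : ∀ i ∈ Finset.Icc 1 N, ∀ j ∈ Finset.Icc 1 N, i ≤ j → ξ j ≤ ξ i)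
    (hcard : M < ((((Finset.Icc 1 N).filter fun i => 0 < ξ i).card : ℝ)))
    (αstar : ℕ → ℝ)
    (hαstar : ∀ i, αstar i =
      if i ≤ ⌊M⌋₊ then (1 : ℝ) else if i = ⌊M⌋₊ + 1 then M - (⌊M⌋₊ : ℝ) else 0) :
    (∀ i ∈ Finset.Icc 1 N, 0 ≤ αstar i ∧ αstar i ≤ 1) ∧
    (∑ i ∈ Finset.Icc 1 N, αstar i) ≤ M ∧
    (∀ β : ℕ → ℝ, (∀ i ∈ Finset.Icc 1 N, 0 ≤ β i ∧ β i ≤ 1) →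
      (∑ i ∈ Finset.Icc 1 N, β i) ≤ M →
      ∑ i ∈ Finset.Icc 1 N, (1 - αstar i) * ξ i ≤
        ∑ i ∈ Finset.Icc 1 N, (1 - β i) * ξ i) := by
  obtain rfl : αstar = greedyControl M := funext hαstar
  have hfloor_lt_card := (Nat.floor_lt hM.le).mpr hcard
  have hfloor_lt_N : ⌊M⌋₊ < N := by
    have := card_filter_le (Icc 1 N) fun i => 0 < ξ i
    simp only [Nat.card_Icc, add_tsub_cancel_right] at this
    omega
  have hsum := sum_Icc_greedyControl hfloor_lt_N
  refine ⟨fun i _ => greedyControl_mem_Icc hM.le i, hsum.le, fun β hβ hβsum => ?_⟩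
  exact sum_one_sub_mul_le_of_threshold _ _ _ _
    (pos_of_lt_card_filter_pos horder hfloor_lt_card).le (hβsum.trans hsum.ge)
    fun i hi => greedyControl_exchange horder hfloor_lt_N hi (hβ i hi)

/-- Suppose `ξ_1 ≥ … ≥ ξ_N`, `0 < M < N`, the number of agents with positive state
exceeds `M`, and `ξ_{⌈M−1⌉} > ξ_{⌈M⌉} > ξ_{⌈M+1⌉}`.  Then the control `α*` with
`α*_i = 1` for `i ≤ ⌊M⌋`, `α*_{⌊M⌋+1} = M − ⌊M⌋` and `α*_i = 0` otherwise lies in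
`K = {α ∈ [0,1]^N : ∑ α_i ≤ M}` and minimizes `α ↦ ∑_{i=1}^N (1 − α_i) ξ_i` over `K`. -/
theorem instantaneous_decrease_large_Iplus
    (N : ℕ) (M : ℝ) (hM : 0 < M) (hMN : M < (N : ℝ)) (ξ : ℕ → ℝ)
    (horder : ∀ i ∈ Finset.Icc 1 N, ∀ j ∈ Finset.Icc 1 N, i ≤ j → ξ j ≤ ξ i)
    (hcard : M < ((((Finset.Icc 1 N).filter fun i => 0 < ξ i).card : ℝ)))
    (hsep1 : ξ ⌈M⌉₊ < ξ (⌈M - 1⌉₊))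
    (hsep2 : ξ (⌈M + 1⌉₊) < ξ ⌈M⌉₊)
    (αstar : ℕ → ℝ)
    (hαstar : ∀ i, αstar i =
      if i ≤ ⌊M⌋₊ then (1 : ℝ) else if i = ⌊M⌋₊ + 1 then M - (⌊M⌋₊ : ℝ) else 0) :
    (∀ i ∈ Finset.Icc 1 N, 0 ≤ αstar i ∧ αstar i ≤ 1) ∧
    (∑ i ∈ Finset.Icc 1 N, αstar i) ≤ M ∧
    (∀ β : ℕ → ℝ, (∀ i ∈ Finset.Icc 1 N, 0 ≤ β i ∧ β i ≤ 1) →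
      (∑ i ∈ Finset.Icc 1 N, β i) ≤ M →
      ∑ i ∈ Finset.Icc 1 N, (1 - αstar i) * ξ i ≤
        ∑ i ∈ Finset.Icc 1 N, (1 - β i) * ξ i) :=
  instantaneous_decrease_large_Iplus_general N M hM ξ horder hcard αstar hαstar
end

section
/- Let λ : [0,T] → ℝ^N be an absolutely continuous solution of the adjoint equations λ̇_i(t) = (1/N) ∑_{j=1}^N α_j(t) λ_j(t) − λ̄(t) + λ_i(t) for almost every t, where λ̄ = (1/N) ∑_j λ_j. Then for any i, j, the difference z = λ_i − λ_j satisfies z(t) = z(t̄) e^{t−t̄} for all t, t̄ ∈ [0,T]; in particular, if λ_i(t̄) = λ_j(t̄) for some t̄ ∈ [0,T], then λ_i(t) = λ_j(t) for every t ∈ [0,T]. -/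
open MeasureTheory Real

noncomputable section

/-- An (absolutely continuous) solution of the adjoint equations of the final-cost problem,
`λ̇_i = (1/N) ∑_j α_j λ_j − λ̄ + λ_i`, encoded by the corresponding integral equations. -/
def IsAdjointFinal (N : ℕ) (T : ℝ) (α : ℝ → ℕ → ℝ) (lam : ℝ → ℕ → ℝ) : Prop :=
  (∀ i, ContinuousOn (fun t => lam t i) (Set.Icc 0 T)) ∧
  (∀ t ∈ Set.Icc (0 : ℝ) T, ∀ i ∈ Finset.Icc 1 N,
    lam t i = lam 0 i + ∫ s in (0 : ℝ)..t,
      ((N : ℝ)⁻¹ * (∑ j ∈ Finset.Icc 1 N, α s j * lam s j)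
        - (N : ℝ)⁻¹ * (∑ j ∈ Finset.Icc 1 N, lam s j) + lam s i))

/-! The coupling term `(1/N) ∑ α_j λ_j − λ̄` is the same in every equation, so it cancels in
`z = λ_i − λ_j` (it is integrable because `α` is measurable with `0 ≤ α_j ≤ 1`). Hence
`z(u) = z(0) + ∫₀ᵘ z`, i.e. `ż = z`, and uniqueness for this Lipschitz ODE gives
`z(u) = z(0) e^u`. -/

open Set Topology

theorem hasDerivWithinAt_Ici_of_eq_add_integral {F g : ℝ → ℝ} {a b c x : ℝ}
    (hg : ContinuousOn g (Icc a b)) (hF : ∀ u ∈ Icc a b, F u = c + ∫ s in a..u, g s)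
    (hx : x ∈ Ico a b) : HasDerivWithinAt F (g x) (Ici x) x := by
  have hIci : Icc a b ∈ 𝓝[Ici x] x := Icc_mem_nhdsGE_of_mem hx
  have hIoi : Icc a b ∈ 𝓝[Ioi x] x := nhdsWithin_mono x Ioi_subset_Ici_self hIci
  have hint : IntervalIntegrable g volume a x :=
    (hg.mono (uIcc_subset_Icc (left_mem_Icc.2 (hx.1.trans hx.2.le)) (Ico_subset_Icc_self hx)))
      |>.intervalIntegrable
  have hprimitive : HasDerivWithinAt (fun u => c + ∫ s in a..u, g s) (g x) (Ici x) x :=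
    (intervalIntegral.integral_hasDerivWithinAt_right hint
      ⟨Icc a b, hIoi, hg.aestronglyMeasurable measurableSet_Icc⟩
      ((hg.continuousWithinAt (Ico_subset_Icc_self hx)).mono_of_mem_nhdsWithin hIoi)).const_add c
  exact hprimitive.congr_of_eventuallyEq (Filter.eventually_of_mem hIci hF)
    (hF x (Ico_subset_Icc_self hx))

theorem eq_mul_exp_of_eq_add_integral {z : ℝ → ℝ} {a b : ℝ} (hz : ContinuousOn z (Icc a b))
    (h : ∀ u ∈ Icc a b, z u = z a + ∫ s in a..u, z s) :
    ∀ u ∈ Icc a b, z u = z a * exp (u - a) := by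
  have hexp (t : ℝ) : HasDerivAt (fun u => z a * exp (u - a)) (z a * exp (t - a)) t := by
    simpa using ((hasDerivAt_id t).sub_const a).exp.const_mul (z a)
  refine ODE_solution_unique_of_mem_Icc_right (v := fun _ x => x) (s := fun _ => univ) (K := 1)
    (fun _ _ => LipschitzWith.id.lipschitzOnWith) hz
    (fun _ ht => hasDerivWithinAt_Ici_of_eq_add_integral hz h ht) (fun _ _ => mem_univ _)
    (by fun_prop) (fun t _ => (hexp t).hasDerivWithinAt) (fun _ _ => mem_univ _) (by simp)

section Adjoint

variable {N : ℕ} {T M : ℝ} {α lam : ℝ → ℕ → ℝ}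

theorem IsAdmissible.integrableOn_mul (hα : IsAdmissible N T M α) {i : ℕ}
    (hi : i ∈ Finset.Icc 1 N) {f : ℝ → ℝ} (hf : ContinuousOn f (Icc 0 T)) :
    IntegrableOn (fun s => α s i * f s) (Icc 0 T) := by
  have hαi : IntegrableOn (fun s => α s i) (Icc 0 T) :=
    Measure.integrableOn_of_bounded measure_Icc_lt_top.ne (hα.1 i).aestronglyMeasurable (M := 1)
      (ae_restrict_of_forall_mem measurableSet_Icc fun s hs => by
        obtain ⟨h0, h1⟩ := hα.2.1 s hs i hi
        rwa [Real.norm_of_nonneg h0])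
  exact hαi.mul_continuousOn hf isCompact_Icc

theorem IsAdjointFinal.sub_eq_add_integral_sub (hα : IsAdmissible N T M α)
    (hlam : IsAdjointFinal N T α lam) {i j : ℕ} (hi : i ∈ Finset.Icc 1 N)
    (hj : j ∈ Finset.Icc 1 N) :
    ∀ u ∈ Icc 0 T,
      lam u i - lam u j = (lam 0 i - lam 0 j) + ∫ s in 0..u, (lam s i - lam s j) := by
  intro u hu
  have hsub : uIcc 0 u ⊆ Icc 0 T := uIcc_subset_Icc (left_mem_Icc.2 (hu.1.trans hu.2)) hu
  have hlamInt (k : ℕ) : IntervalIntegrable (fun s => lam s k) volume 0 u :=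
    ((hlam.1 k).mono hsub).intervalIntegrable
  have hcoupling : IntegrableOn (fun s =>
      (N : ℝ)⁻¹ * (∑ k ∈ Finset.Icc 1 N, α s k * lam s k)
        - (N : ℝ)⁻¹ * (∑ k ∈ Finset.Icc 1 N, lam s k)) (Icc 0 T) :=
    ((integrable_finsetSum _ fun k hk => hα.integrableOn_mul hk (hlam.1 k)).const_mul _).sub
      ((integrable_finsetSum _ fun k _ => (hlam.1 k).integrableOn_Icc).const_mul _)
  have hsplit := intervalIntegral.integral_sub
    (((hcoupling.mono_set hsub).intervalIntegrable).add (hlamInt i))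
    (((hcoupling.mono_set hsub).intervalIntegrable).add (hlamInt j))
  simp only [add_sub_add_left_eq_sub] at hsplit
  rw [hlam.2 u hu i hi, hlam.2 u hu j hj]
  linear_combination -hsplit

end Adjoint

theorem adjoint_difference_exponential_general
    (N : ℕ) (T M : ℝ)
    (α : ℝ → ℕ → ℝ) (hα : IsAdmissible N T M α)
    (lam : ℝ → ℕ → ℝ) (hlam : IsAdjointFinal N T α lam) :
    ∀ i ∈ Finset.Icc 1 N, ∀ j ∈ Finset.Icc 1 N,
      ∀ t ∈ Set.Icc (0 : ℝ) T, ∀ tbar ∈ Set.Icc (0 : ℝ) T,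
        (lam t i - lam t j = (lam tbar i - lam tbar j) * Real.exp (t - tbar)) ∧
        (lam tbar i = lam tbar j → lam t i = lam t j) := by
  intro i hi j hj t ht tbar htbar
  have hz := eq_mul_exp_of_eq_add_integral (z := fun s => lam s i - lam s j)
    ((hlam.1 i).sub (hlam.1 j)) (hlam.sub_eq_add_integral_sub hα hi hj)
  have hexp : lam t i - lam t j = (lam tbar i - lam tbar j) * exp (t - tbar) := by
    rw [hz t ht, hz tbar htbar, mul_assoc, ← exp_add]
    ring_nf
  refine ⟨hexp, fun h => ?_⟩
  rwa [h, sub_self, zero_mul, sub_eq_zero] at hexp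

/-- For any solution of the adjoint equations, the difference `λ_i − λ_j` satisfies
`z(t) = z(t̄) e^{t − t̄}`; in particular two covectors that coincide at one time coincide
at every time of `[0,T]`. -/
theorem adjoint_difference_exponential
    (N : ℕ) (hN : 1 ≤ N) (T M : ℝ) (hT : 0 < T) (hM : 0 < M)
    (α : ℝ → ℕ → ℝ) (hα : IsAdmissible N T M α)
    (lam : ℝ → ℕ → ℝ) (hlam : IsAdjointFinal N T α lam) :
    ∀ i ∈ Finset.Icc 1 N, ∀ j ∈ Finset.Icc 1 N,
      ∀ t ∈ Set.Icc (0 : ℝ) T, ∀ tbar ∈ Set.Icc (0 : ℝ) T,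
        (lam t i - lam t j = (lam tbar i - lam tbar j) * Real.exp (t - tbar)) ∧
        (lam tbar i = lam tbar j → lam t i = lam t j) :=
  adjoint_difference_exponential_general N T M α hα lam hlam

end
end

section
/- Assume the initial state is ordered: ξ⁰_1 ≥ ξ⁰_2 ≥ … ≥ ξ⁰_N. If there exists a control optimal for the final cost, then there exists a control α, optimal for the final cost, whose trajectory ξ satisfies ξ_i(t) ≥ ξ_j(t) for every t ∈ [0,T] whenever i < j. -/
open MeasureTheory Real

noncomputable section

/-- The migration functional `𝕍(t) = (1/N) ∑_{i=1}^N ξ_i(t)²`. -/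
def migV (N : ℕ) (ξ : ℝ → ℕ → ℝ) (t : ℝ) : ℝ :=
  (N : ℝ)⁻¹ * ∑ i ∈ Finset.Icc 1 N, (ξ t i) ^ 2

/-- `α` (with trajectory `ξ`) is optimal for the final cost `𝕍(T)`. -/
def IsOptimalFinal (N : ℕ) (T M : ℝ) (ξ0 : ℕ → ℝ) (α ξ : ℝ → ℕ → ℝ) : Prop :=
  IsAdmissible N T M α ∧ IsTrajectory N T α ξ0 ξ ∧
  ∀ β η, IsAdmissible N T M β → IsTrajectory N T β ξ0 η → migV N ξ T ≤ migV N η T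

/-!
If agents `i < j` exchange their controls exactly at the times when `ξ_i ≤ ξ_j`, the new pair of
states is `(max ξ_i ξ_j, min ξ_i ξ_j)`: both states are absolutely continuous, and at almost every
time the derivative of `max ξ_i ξ_j` is the derivative of whichever of the two is on top (at a tie
where `max ξ_i ξ_j` is differentiable, its differences with `ξ_i` and `ξ_j` have a minimum there, so
all three derivatives agree). Such a compare-exchange permutes the state at each time, so it
preserves the mean `ξ̄`, the admissibility of the control and `𝕍(T)`; it therefore keeps the control
optimal. Running the comparators of a sorting network (selection sort) orders the state at every
time at once.
-/

open Set Filter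

theorem LipschitzWith.comp_absolutelyContinuousOnInterval {X Y : Type*} [PseudoMetricSpace X]
    [PseudoMetricSpace Y] {g : X → Y} {K : NNReal} {f : ℝ → X} {a b : ℝ}
    (hg : LipschitzWith K g) (hf : AbsolutelyContinuousOnInterval f a b) :
    AbsolutelyContinuousOnInterval (g ∘ f) a b := by
  unfold AbsolutelyContinuousOnInterval at hf ⊢
  refine squeeze_zero (fun _ ↦ Finset.sum_nonneg fun _ _ ↦ dist_nonneg) (fun E ↦ ?_)
    (by simpa using hf.const_mul (K : ℝ))
  rw [Finset.mul_sum]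
  gcongr
  exact hg.dist_le_mul _ _

theorem AbsolutelyContinuousOnInterval.prodMk {X Y : Type*} [PseudoMetricSpace X]
    [PseudoMetricSpace Y] {f : ℝ → X} {g : ℝ → Y} {a b : ℝ}
    (hf : AbsolutelyContinuousOnInterval f a b) (hg : AbsolutelyContinuousOnInterval g a b) :
    AbsolutelyContinuousOnInterval (fun x ↦ (f x, g x)) a b := by
  unfold AbsolutelyContinuousOnInterval at hf hg ⊢
  refine squeeze_zero (fun _ ↦ Finset.sum_nonneg fun _ _ ↦ dist_nonneg) (fun E ↦ ?_)
    (by simpa using hf.add hg)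
  rw [← Finset.sum_add_distrib]
  gcongr
  exact max_le_add_of_nonneg dist_nonneg dist_nonneg

theorem deriv_eq_of_isLocalExtr_sub {M P : ℝ → ℝ} {x f : ℝ} (hP : HasDerivAt P f x)
    (hM : DifferentiableAt ℝ M x) (hext : IsLocalExtr (fun y ↦ M y - P y) x) :
    deriv M x = f :=
  sub_eq_zero.mp (hext.hasDerivAt_eq_zero (hM.hasDerivAt.sub hP))

theorem deriv_max_eq_ite {P Q : ℝ → ℝ} {x f g : ℝ} (hP : HasDerivAt P f x)
    (hQ : HasDerivAt Q g x) (hM : DifferentiableAt ℝ (fun y ↦ max (P y) (Q y)) x) :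
    deriv (fun y ↦ max (P y) (Q y)) x = if Q x < P x then f else g := by
  split_ifs with h
  · refine deriv_eq_of_isLocalExtr_sub hP hM (Or.inl (Eventually.of_forall fun y ↦ ?_))
    simp [max_eq_left h.le]
  · refine deriv_eq_of_isLocalExtr_sub hQ hM (Or.inl (Eventually.of_forall fun y ↦ ?_))
    simp [max_eq_right (not_lt.mp h)]

theorem max_eq_add_integral_ite {p q f g : ℝ → ℝ} {a b : ℝ}
    (hf : IntervalIntegrable f volume a b) (hg : IntervalIntegrable g volume a b)
    (hp : ∀ x ∈ uIcc a b, p x = p a + ∫ s in a..x, f s)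
    (hq : ∀ x ∈ uIcc a b, q x = q a + ∫ s in a..x, g s) :
    max (p b) (q b) = max (p a) (q a) + ∫ s in a..b, if q s < p s then f s else g s := by
  set M : ℝ → ℝ := fun x ↦ max (p a + ∫ s in a..x, f s) (q a + ∫ s in a..x, g s)
  have hM : AbsolutelyContinuousOnInterval M a b :=
    ((((isometry_add_left (p a)).lipschitz.comp LipschitzWith.prod_fst).max
      ((isometry_add_left (q a)).lipschitz.comp LipschitzWith.prod_snd)
      ).comp_absolutelyContinuousOnInterval
      ((hf.absolutelyContinuousOnInterval_intervalIntegral left_mem_uIcc).prodMk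
        (hg.absolutelyContinuousOnInterval_intervalIntegral left_mem_uIcc)) :)
  have hderiv : ∀ᵐ x, x ∈ uIoc a b → (if q x < p x then f x else g x) = deriv M x := by
    filter_upwards [hf.ae_hasDerivAt_integral, hg.ae_hasDerivAt_integral,
      hM.ae_differentiableAt] with x hfx hgx hMx hx
    have hx' := uIoc_subset_uIcc hx
    rw [hp x hx', hq x hx']
    exact (deriv_max_eq_ite ((hfx hx' a left_mem_uIcc).const_add _)
      ((hgx hx' a left_mem_uIcc).const_add _) (hMx hx')).symm
  rw [intervalIntegral.integral_congr_ae hderiv, hM.integral_deriv_eq_sub,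
    hp b right_mem_uIcc, hq b right_mem_uIcc]
  simp [M]

-- Same condition `q s < p s` as for `max`: at every `s` the integrands of `max` and `min` are
-- `f` and `g` in some order, so the two agents exchange their controls rather than share one.
theorem min_eq_add_integral_ite {p q f g : ℝ → ℝ} {a b : ℝ}
    (hf : IntervalIntegrable f volume a b) (hg : IntervalIntegrable g volume a b)
    (hp : ∀ x ∈ uIcc a b, p x = p a + ∫ s in a..x, f s)
    (hq : ∀ x ∈ uIcc a b, q x = q a + ∫ s in a..x, g s) :
    min (p b) (q b) = min (p a) (q a) + ∫ s in a..b, if q s < p s then g s else f s := by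
  have hneg := max_eq_add_integral_ite (p := fun x ↦ -q x) (q := fun x ↦ -p x)
    (f := fun x ↦ -g x) (g := fun x ↦ -f x) hg.neg hf.neg
    (fun x hx ↦ by rw [hq x hx, intervalIntegral.integral_neg]; ring)
    (fun x hx ↦ by rw [hp x hx, intervalIntegral.integral_neg]; ring)
  simp only [neg_lt_neg_iff, max_comm (-q _), max_neg_neg] at hneg
  rw [← neg_neg (min (p b) (q b)), hneg, neg_add, neg_neg, ← intervalIntegral.integral_neg]
  congr 1
  refine intervalIntegral.integral_congr fun s _ ↦ ?_
  split_ifs <;> simp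

section CompareExchange

variable {ι α : Type*} [DecidableEq ι]

def swapUnless (c : Prop) [Decidable c] (i j : ι) (v : ι → α) : ι → α :=
  fun k ↦ if c then v k else v (Equiv.swap i j k)

theorem swapUnless_apply_left (c : Prop) [Decidable c] (i j : ι) (v : ι → α) :
    swapUnless c i j v i = if c then v i else v j := by
  simp [swapUnless]

theorem swapUnless_apply_right (c : Prop) [Decidable c] (i j : ι) (v : ι → α) :
    swapUnless c i j v j = if c then v j else v i := by
  simp [swapUnless]

theorem swapUnless_apply_of_ne (c : Prop) [Decidable c] {i j k : ι} (v : ι → α)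
    (hki : k ≠ i) (hkj : k ≠ j) : swapUnless c i j v k = v k := by
  simp [swapUnless, Equiv.swap_apply_of_ne_of_ne hki hkj]

theorem Finset.swap_mem {s : Finset ι} {i j k : ι} (hi : i ∈ s) (hj : j ∈ s) (hk : k ∈ s) :
    Equiv.swap i j k ∈ s := by
  rw [Equiv.swap_apply_def]
  split_ifs <;> assumption

theorem sum_swapUnless {β : Type*} [AddCommMonoid β] (c : Prop) [Decidable c]
    {s : Finset ι} {i j : ι} (hi : i ∈ s) (hj : j ∈ s) (v : ι → α) (g : α → β) :
    ∑ k ∈ s, g (swapUnless c i j v k) = ∑ k ∈ s, g (v k) := by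
  unfold swapUnless
  split_ifs
  · rfl
  · refine (Equiv.swap i j).sum_comp s (fun k ↦ g (v k)) fun k hk ↦ ?_
    obtain ⟨-, rfl | rfl⟩ := Equiv.swap_apply_ne_self_iff.mp hk <;> assumption

variable [LinearOrder α]

def compareExchange (i j : ℕ) (v : ℕ → α) : ℕ → α :=
  swapUnless (v j < v i) i j v

theorem compareExchange_apply_left (i j : ℕ) (v : ℕ → α) :
    compareExchange i j v i = max (v i) (v j) := by
  rw [compareExchange, swapUnless_apply_left]
  split_ifs with h
  · exact (max_eq_left h.le).symm
  · exact (max_eq_right (not_lt.mp h)).symm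

theorem compareExchange_apply_right (i j : ℕ) (v : ℕ → α) :
    compareExchange i j v j = min (v i) (v j) := by
  rw [compareExchange, swapUnless_apply_right]
  split_ifs with h
  · exact (min_eq_right h.le).symm
  · exact (min_eq_left (not_lt.mp h)).symm

theorem compareExchange_apply_of_ne {i j k : ℕ} (v : ℕ → α) (hki : k ≠ i) (hkj : k ≠ j) :
    compareExchange i j v k = v k :=
  swapUnless_apply_of_ne _ v hki hkj

theorem continuous_compareExchange {τ : Type*} [TopologicalSpace τ] [TopologicalSpace α]
    [OrderClosedTopology α] {ξ : τ → ℕ → α} (hc : ∀ k, Continuous fun t ↦ ξ t k) (i j k : ℕ) :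
    Continuous fun t ↦ compareExchange i j (ξ t) k := by
  rcases eq_or_ne k i with rfl | hki
  · simp only [compareExchange_apply_left]
    exact (hc k).max (hc j)
  rcases eq_or_ne k j with rfl | hkj
  · simp only [compareExchange_apply_right]
    exact (hc i).min (hc k)
  · simp only [compareExchange_apply_of_ne _ hki hkj]
    exact hc k

def comparePass (i : ℕ) : ℕ → (ℕ → α) → ℕ → α
  | 0, v => v
  | n + 1, v => compareExchange i (i + n + 1) (comparePass i n v)

def selectionSort (N : ℕ) : ℕ → (ℕ → α) → ℕ → α
  | 0, v => v
  | m + 1, v => comparePass (m + 1) (N - (m + 1)) (selectionSort N m v)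

def SortedBelow (N m : ℕ) (v : ℕ → α) : Prop :=
  ∀ i j, 1 ≤ i → i < m → i < j → j ≤ N → v j ≤ v i

variable {N m i j : ℕ} {v : ℕ → α}

theorem SortedBelow.compareExchange (hv : SortedBelow N m v) (hmi : m ≤ i) (hij : i < j)
    (hjN : j ≤ N) : SortedBelow N m (compareExchange i j v) := by
  intro i' j' hi' hi'm hi'j' hj'N
  rw [compareExchange_apply_of_ne (k := i') v (by omega) (by omega)]
  have hvi : v i ≤ v i' := hv i' i hi' hi'm (by omega) (by omega)
  rcases eq_or_ne j' i with rfl | hj'i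
  · rw [compareExchange_apply_left]
    exact max_le hvi (hv i' j hi' hi'm (by omega) hjN)
  rcases eq_or_ne j' j with rfl | hj'j
  · rw [compareExchange_apply_right]
    exact (min_le_left _ _).trans hvi
  · rw [compareExchange_apply_of_ne v hj'i hj'j]
    exact hv i' j' hi' hi'm hi'j' hj'N

theorem SortedBelow.comparePass (hv : SortedBelow N i v) {n : ℕ} (hn : i + n ≤ N) :
    SortedBelow N i (comparePass i n v) ∧
      ∀ j, i < j → j ≤ i + n → comparePass i n v j ≤ comparePass i n v i := by
  induction n with
  | zero => exact ⟨hv, fun j h₁ h₂ ↦ absurd h₂ (by omega)⟩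
  | succ n ih =>
    obtain ⟨hsorted, hmax⟩ := ih (by omega)
    refine ⟨hsorted.compareExchange le_rfl (by omega) hn, fun j hij hjn ↦ ?_⟩
    simp only [_root_.comparePass, compareExchange_apply_left]
    rcases eq_or_ne j (i + n + 1) with rfl | hj
    · rw [compareExchange_apply_right]
      exact min_le_max
    · rw [compareExchange_apply_of_ne _ (by omega) hj]
      exact (hmax j hij (by omega)).trans (le_max_left _ _)

theorem sortedBelow_selectionSort (hm : m ≤ N) (v : ℕ → α) :
    SortedBelow N (m + 1) (selectionSort N m v) := by
  induction m with
  | zero => intro i j h₁ h₂; omega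
  | succ m ih =>
    obtain ⟨hsorted, hmax⟩ := (ih (by omega)).comparePass (n := N - (m + 1)) (by omega)
    intro i j hi him hij hjN
    rcases eq_or_ne i (m + 1) with rfl | hi'
    · exact hmax j hij (by omega)
    · exact hsorted i j hi (by omega) hij hjN

theorem exists_sorted_of_forall_compareExchange {τ : Type*} (P : (τ → ℕ → α) → Prop)
    (hP : ∀ ξ i j, 1 ≤ i → i < j → j ≤ N → P ξ → P fun t ↦ compareExchange i j (ξ t))
    {ξ : τ → ℕ → α} (hξ : P ξ) :
    ∃ η, P η ∧ ∀ t i j, 1 ≤ i → i < j → j ≤ N → η t j ≤ η t i := by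
  have hpass : ∀ ξ i n, 1 ≤ i → i + n ≤ N → P ξ → P fun t ↦ comparePass i n (ξ t) := by
    intro ξ i n hi hn hξ
    induction n with
    | zero => exact hξ
    | succ n ih => exact hP _ i _ hi (by omega) hn (ih (by omega))
  have hsort : ∀ m ≤ N, P fun t ↦ selectionSort N m (ξ t) := by
    intro m hm
    induction m with
    | zero => exact hξ
    | succ m ih => exact hpass _ _ _ (by omega) (by omega) (ih (by omega))
  exact ⟨_, hsort N le_rfl, fun t i j hi hij hjN ↦
    sortedBelow_selectionSort le_rfl (ξ t) i j hi (by omega) hij hjN⟩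

end CompareExchange

section Control

variable {N : ℕ} {T M : ℝ} {ξ0 : ℕ → ℝ} {α ξ : ℝ → ℕ → ℝ} {i j k : ℕ}

def drift (N : ℕ) (α ξ : ℝ → ℕ → ℝ) (s : ℝ) (k : ℕ) : ℝ :=
  -(ξ s k) + (1 - α s k) * xbar N ξ s

theorem continuous_xbar (hc : ∀ k, Continuous fun t ↦ ξ t k) : Continuous (xbar N ξ) :=
  continuous_const.mul (continuous_finsetSum _ fun k _ ↦ hc k)

theorem xbar_swapUnless (c : ℝ → Prop) [DecidablePred c] (hi : i ∈ Finset.Icc 1 N)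
    (hj : j ∈ Finset.Icc 1 N) : xbar N (fun t ↦ swapUnless (c t) i j (ξ t)) = xbar N ξ := by
  ext s
  exact congrArg _ (sum_swapUnless (c s) hi hj (ξ s) id)

theorem drift_swapUnless (c : ℝ → Prop) [DecidablePred c] (hi : i ∈ Finset.Icc 1 N)
    (hj : j ∈ Finset.Icc 1 N) (s : ℝ) :
    drift N (fun t ↦ swapUnless (c t) i j (α t)) (fun t ↦ swapUnless (c t) i j (ξ t)) s =
      swapUnless (c s) i j (drift N α ξ s) := by
  ext k
  rw [drift, xbar_swapUnless c hi hj]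
  unfold swapUnless drift
  split_ifs <;> rfl

theorem IsAdmissible.swapUnless (hα : IsAdmissible N T M α) (c : ℝ → Prop) [DecidablePred c]
    (hc : MeasurableSet {t | c t}) (hi : i ∈ Finset.Icc 1 N) (hj : j ∈ Finset.Icc 1 N) :
    IsAdmissible N T M fun t ↦ swapUnless (c t) i j (α t) := by
  refine ⟨fun k ↦ Measurable.ite hc (hα.1 k) (hα.1 _), fun t ht k hk ↦ ?_, fun t ht ↦ ?_⟩
  · dsimp only [_root_.swapUnless]
    split_ifs
    exacts [hα.2.1 t ht k hk, hα.2.1 t ht _ (Finset.swap_mem hi hj hk)]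
  · exact (sum_swapUnless (c t) hi hj (α t) id).le.trans (hα.2.2 t ht)

theorem IsAdmissible.intervalIntegrable_drift (hα : IsAdmissible N T M α)
    (hc : ∀ k, Continuous fun t ↦ ξ t k) (hk : k ∈ Finset.Icc 1 N) {t : ℝ} (ht : t ∈ Icc 0 T) :
    IntervalIntegrable (fun s ↦ drift N α ξ s k) volume 0 t := by
  have hbound : ∀ᵐ s ∂volume.restrict (Icc 0 T), ‖1 - α s k‖ ≤ 1 := by
    refine (ae_restrict_iff' measurableSet_Icc).mpr (Eventually.of_forall ?_)
    intro s hs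
    have := hα.2.1 s hs k hk
    rw [Real.norm_eq_abs, abs_le]
    constructor <;> linarith
  have hdrift : IntegrableOn (fun s ↦ drift N α ξ s k) (Icc 0 T) :=
    (hc k).neg.integrableOn_Icc.add ((continuous_xbar hc).integrableOn_Icc.bdd_mul
      (measurable_const.sub (hα.1 k)).aestronglyMeasurable hbound)
  exact (hdrift.mono_set (uIcc_subset_Icc (left_mem_Icc.mpr (ht.1.trans ht.2)) ht)
    ).intervalIntegrable

theorem IsTrajectory.apply_zero (hξ : IsTrajectory N T α ξ0 ξ) (hT : 0 ≤ T)
    (hk : k ∈ Finset.Icc 1 N) : ξ 0 k = ξ0 k := by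
  simpa using hξ.2 0 (left_mem_Icc.mpr hT) k hk

theorem IsTrajectory.eq_add_integral (hξ : IsTrajectory N T α ξ0 ξ) (hk : k ∈ Finset.Icc 1 N)
    {t : ℝ} (ht : t ∈ Icc 0 T) :
    ∀ x ∈ uIcc 0 t, ξ x k = ξ 0 k + ∫ s in (0 : ℝ)..x, drift N α ξ s k := by
  intro x hx
  rw [uIcc_of_le ht.1] at hx
  rw [hξ.apply_zero (ht.1.trans ht.2) hk]
  exact hξ.2 x ⟨hx.1, hx.2.trans ht.2⟩ k hk

theorem IsTrajectory.compareExchange (hα : IsAdmissible N T M α) (hξ : IsTrajectory N T α ξ0 ξ)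
    (hc : ∀ k, Continuous fun t ↦ ξ t k) (hi : i ∈ Finset.Icc 1 N) (hj : j ∈ Finset.Icc 1 N)
    (h0 : ξ0 j ≤ ξ0 i) :
    IsTrajectory N T (fun t ↦ swapUnless (ξ t j < ξ t i) i j (α t)) ξ0
      fun t ↦ compareExchange i j (ξ t) := by
  refine ⟨fun k ↦ (continuous_compareExchange hc i j k).continuousOn, fun t ht k hk ↦ ?_⟩
  have hdrift := drift_swapUnless (α := α) (ξ := ξ) (fun s ↦ ξ s j < ξ s i) hi hj
  have hT : 0 ≤ T := ht.1.trans ht.2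
  have hξi := hξ.eq_add_integral hi ht
  have hξj := hξ.eq_add_integral hj ht
  have hfi := hα.intervalIntegrable_drift hc hi ht
  have hfj := hα.intervalIntegrable_drift hc hj ht
  refine Eq.trans ?_ (congrArg (ξ0 k + ·)
    (intervalIntegral.integral_congr fun s _ ↦ (congrFun (hdrift s) k).symm))
  rcases eq_or_ne k i with rfl | hki
  · simp only [compareExchange_apply_left, swapUnless_apply_left]
    rw [max_eq_add_integral_ite hfi hfj hξi hξj, hξ.apply_zero hT hi, hξ.apply_zero hT hj,
      max_eq_left h0]
  rcases eq_or_ne k j with rfl | hkj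
  · simp only [compareExchange_apply_right, swapUnless_apply_right]
    rw [min_eq_add_integral_ite hfi hfj hξi hξj, hξ.apply_zero hT hi, hξ.apply_zero hT hj,
      min_eq_right h0]
  · simp only [compareExchange_apply_of_ne _ hki hkj, swapUnless_apply_of_ne _ _ hki hkj]
    exact hξ.2 t ht k hk

theorem migV_compareExchange (hi : i ∈ Finset.Icc 1 N) (hj : j ∈ Finset.Icc 1 N) (t : ℝ) :
    migV N (fun t ↦ compareExchange i j (ξ t)) t = migV N ξ t :=
  congrArg _ (sum_swapUnless _ hi hj (ξ t) (· ^ 2))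

theorem IsOptimalFinal.compareExchange (hopt : IsOptimalFinal N T M ξ0 α ξ)
    (hc : ∀ k, Continuous fun t ↦ ξ t k) (hi : i ∈ Finset.Icc 1 N) (hj : j ∈ Finset.Icc 1 N)
    (h0 : ξ0 j ≤ ξ0 i) :
    IsOptimalFinal N T M ξ0 (fun t ↦ swapUnless (ξ t j < ξ t i) i j (α t))
      fun t ↦ compareExchange i j (ξ t) := by
  obtain ⟨hα, hξ, hmin⟩ := hopt
  refine ⟨hα.swapUnless _ (measurableSet_lt (hc j).measurable (hc i).measurable) hi hj,
    hξ.compareExchange hα hc hi hj h0, fun β η hβ hη ↦ ?_⟩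
  rw [migV_compareExchange hi hj]
  exact hmin β η hβ hη

theorem IsOptimalFinal.exists_continuous (hopt : IsOptimalFinal N T M ξ0 α ξ) (hT : 0 ≤ T) :
    ∃ ξ', IsOptimalFinal N T M ξ0 α ξ' ∧ ∀ k, Continuous fun t ↦ ξ' t k := by
  obtain ⟨hα, hξ, hmin⟩ := hopt
  set ξ' : ℝ → ℕ → ℝ := fun t ↦ ξ (projIcc 0 T hT t)
  have heq : ∀ t ∈ Icc 0 T, ξ' t = ξ t := fun t ht ↦ by simp [ξ', projIcc_of_mem hT ht]
  have hc : ∀ k, Continuous fun t ↦ ξ' t k := fun k ↦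
    (hξ.1 k).comp_continuous (continuous_subtype_val.comp continuous_projIcc)
      fun t ↦ (projIcc 0 T hT t).2
  refine ⟨ξ', ⟨hα, ⟨fun k ↦ (hc k).continuousOn, fun t ht k hk ↦ ?_⟩, fun β η hβ hη ↦ ?_⟩, hc⟩
  · rw [heq t ht, hξ.2 t ht k hk]
    refine congrArg _ (intervalIntegral.integral_congr fun s hs ↦ ?_)
    rw [uIcc_of_le ht.1] at hs
    simp only [xbar, heq s ⟨hs.1, hs.2.trans ht.2⟩]
  · simpa only [migV, heq T (right_mem_Icc.mpr hT)] using hmin β η hβ hη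

end Control

theorem exists_ordered_optimal_control_general
    (N : ℕ) (T M : ℝ) (hT : 0 < T) (ξ0 : ℕ → ℝ)
    (hord : ∀ i ∈ Finset.Icc 1 N, ∀ j ∈ Finset.Icc 1 N, i ≤ j → ξ0 j ≤ ξ0 i)
    (hex : ∃ α ξ, IsOptimalFinal N T M ξ0 α ξ) :
    ∃ α ξ, IsOptimalFinal N T M ξ0 α ξ ∧
      ∀ t ∈ Set.Icc (0 : ℝ) T, ∀ i ∈ Finset.Icc 1 N, ∀ j ∈ Finset.Icc 1 N,
        i < j → ξ t j ≤ ξ t i := by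
  obtain ⟨α, ξ, hopt⟩ := hex
  obtain ⟨ξ, hopt, hc⟩ := hopt.exists_continuous hT.le
  let Good : (ℝ → ℕ → ℝ) → Prop := fun ξ ↦
    (∃ α, IsOptimalFinal N T M ξ0 α ξ) ∧ ∀ k, Continuous fun t ↦ ξ t k
  have hstep : ∀ ξ i j, 1 ≤ i → i < j → j ≤ N → Good ξ →
      Good fun t ↦ compareExchange i j (ξ t) := by
    rintro ξ i j hi hij hjN ⟨⟨α, hopt⟩, hc⟩
    have hi' : i ∈ Finset.Icc 1 N := Finset.mem_Icc.mpr ⟨hi, by omega⟩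
    have hj' : j ∈ Finset.Icc 1 N := Finset.mem_Icc.mpr ⟨by omega, hjN⟩
    exact ⟨⟨_, hopt.compareExchange hc hi' hj' (hord i hi' j hj' hij.le)⟩,
      continuous_compareExchange hc i j⟩
  obtain ⟨η, ⟨⟨β, hβ⟩, -⟩, hsorted⟩ :=
    exists_sorted_of_forall_compareExchange Good hstep ⟨⟨α, hopt⟩, hc⟩
  exact ⟨β, η, hβ, fun t _ i hi j hj hij ↦
    hsorted t i j (Finset.mem_Icc.mp hi).1 hij (Finset.mem_Icc.mp hj).2⟩

/-- If the initial state is ordered and an optimal control for the final cost exists, then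
there is an optimal control whose trajectory remains ordered on all of `[0,T]`. -/
theorem exists_ordered_optimal_control
    (N : ℕ) (hN : 1 ≤ N) (T M : ℝ) (hT : 0 < T) (hM : 0 < M) (ξ0 : ℕ → ℝ)
    (hord : ∀ i ∈ Finset.Icc 1 N, ∀ j ∈ Finset.Icc 1 N, i ≤ j → ξ0 j ≤ ξ0 i)
    (hex : ∃ α ξ, IsOptimalFinal N T M ξ0 α ξ) :
    ∃ α ξ, IsOptimalFinal N T M ξ0 α ξ ∧
      ∀ t ∈ Set.Icc (0 : ℝ) T, ∀ i ∈ Finset.Icc 1 N, ∀ j ∈ Finset.Icc 1 N,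
        i < j → ξ t j ≤ ξ t i :=
  exists_ordered_optimal_control_general N T M hT ξ0 hord hex

end
end

section
/- Let α be an admissible control with trajectory ξ, and suppose that ξ_i(t) ≥ ξ_j(t) for all t ∈ [0,T] whenever i < j. Let λ : [0,T] → ℝ^N be an absolutely continuous solution of the integral-cost adjoint equations λ̇_i(t) = λ_i(t) − (1/N) ∑_{j=1}^N (1 − α_j(t)) λ_j(t) − 2 ξ_i(t) for almost every t, with terminal condition λ(T) = 0. Then λ_i(t) ≥ λ_j(t) for all t ∈ [0,T] whenever i < j. -/
open MeasureTheory Real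

noncomputable section

/-- A full-strength control: admissible with total strength exactly `1` at every time. -/
def IsFullStrength (N : ℕ) (T : ℝ) (α : ℝ → ℕ → ℝ) : Prop :=
  IsAdmissible N T 1 α ∧ ∀ t ∈ Set.Icc (0 : ℝ) T, ∑ i ∈ Finset.Icc 1 N, α t i = 1

/-- The partial mean `ξ̄_{1,l}(t) = (1/l) ∑_{i=1}^l ξ_i(t)`. -/
def pmean (l : ℕ) (ξ : ℝ → ℕ → ℝ) (t : ℝ) : ℝ :=
  (l : ℝ)⁻¹ * ∑ i ∈ Finset.Icc 1 l, ξ t i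

/-- The partial mean `(1/l) ∑_{i=1}^l ξ⁰_i` of the initial state. -/
def pmean0 (l : ℕ) (ξ0 : ℕ → ℝ) : ℝ :=
  (l : ℝ)⁻¹ * ∑ i ∈ Finset.Icc 1 l, ξ0 i

/-- An (absolutely continuous) solution of the adjoint equations of the integral-cost
problem, `λ̇_i = λ_i − (1/N) ∑_j (1 − α_j) λ_j − 2 ξ_i` with `λ(T) = 0`, encoded by the
corresponding integral equations. -/
def IsAdjointIntegral (N : ℕ) (T : ℝ) (α ξ lam : ℝ → ℕ → ℝ) : Prop :=
  (∀ i, ContinuousOn (fun t => lam t i) (Set.Icc 0 T)) ∧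
  (∀ i ∈ Finset.Icc 1 N, lam T i = 0) ∧
  (∀ t ∈ Set.Icc (0 : ℝ) T, ∀ i ∈ Finset.Icc 1 N,
    lam t i = lam 0 i + ∫ s in (0 : ℝ)..t,
      (lam s i - (N : ℝ)⁻¹ * (∑ j ∈ Finset.Icc 1 N, (1 - α s j) * lam s j) - 2 * ξ s i))

/-!
For `i < j` the difference `d = λ_i - λ_j` of two covectors solves the scalar linear equation
`ḋ = d - 2 (ξ_i - ξ_j)`, in which the common mean-field term has cancelled. Hence
`(e^{-t} d)˙ = -2 e^{-t} (ξ_i - ξ_j) ≤ 0` by the ordering of the trajectory, so `e^{-t} d(t)` is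
antitone on `[0,T]` and `d(t) ≥ e^{t-T} d(T) = 0`.
-/

open Set Topology

theorem hasDerivAt_of_forall_eq_add_integral {E : Type*} [NormedAddCommGroup E]
    [NormedSpace ℝ E] [CompleteSpace E] {a b x : ℝ} {F f : ℝ → E}
    (hf : ContinuousOn f (Icc a b)) (hF : ∀ t ∈ Icc a b, F t = F a + ∫ s in a..t, f s)
    (hx : x ∈ Ioo a b) : HasDerivAt F (f x) x := by
  have hIcc : Icc a b ∈ 𝓝 x := Icc_mem_nhds hx.1 hx.2
  have hint : IntervalIntegrable f volume a x :=
    (hf.mono (uIcc_subset_Icc (left_mem_Icc.2 (hx.1.trans hx.2).le) (Ioo_subset_Icc_self hx)))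
      |>.intervalIntegrable
  have hmeas : StronglyMeasurableAtFilter f (𝓝 x) :=
    (hf.mono Ioo_subset_Icc_self).stronglyMeasurableAtFilter isOpen_Ioo x hx
  refine ((intervalIntegral.integral_hasDerivAt_right hint hmeas
    (hf.continuousAt hIcc)).const_add (F a)).congr_of_eventuallyEq ?_
  filter_upwards [hIcc] with t ht using hF t ht

theorem nonneg_of_forall_eq_add_integral_sub {a b : ℝ} {d g : ℝ → ℝ}
    (hd : ContinuousOn d (Icc a b)) (hg : ContinuousOn g (Icc a b))
    (hg_nonneg : ∀ s ∈ Icc a b, 0 ≤ g s)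
    (hdg : ∀ t ∈ Icc a b, d t = d a + ∫ s in a..t, (d s - g s))
    (hb : 0 ≤ d b) {t : ℝ} (ht : t ∈ Icc a b) : 0 ≤ d t := by
  set G : ℝ → ℝ := fun u => exp (-u) * d u
  have hG_deriv : ∀ x ∈ Ioo a b, HasDerivAt G (-(exp (-x) * g x)) x := by
    intro x hx
    have hd_deriv : HasDerivAt d (d x - g x) x :=
      hasDerivAt_of_forall_eq_add_integral (f := fun s => d s - g s) (hd.sub hg) hdg hx
    exact ((hasDerivAt_neg x).exp.mul hd_deriv).congr_deriv (by ring)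
  have hG_anti : AntitoneOn G (Icc a b) := by
    refine antitoneOn_of_deriv_nonpos (convex_Icc a b)
      ((continuous_neg.rexp.continuousOn).mul hd) ?_ ?_ <;> rw [interior_Icc]
    · exact fun x hx => (hG_deriv x hx).differentiableAt.differentiableWithinAt
    · intro x hx
      rw [(hG_deriv x hx).deriv, neg_nonpos]
      exact mul_nonneg (exp_pos _).le (hg_nonneg x (Ioo_subset_Icc_self hx))
  have hGt : 0 ≤ G t :=
    (mul_nonneg (exp_pos _).le hb).trans (hG_anti ht (right_mem_Icc.2 (ht.1.trans ht.2)) ht.2)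
  exact nonneg_of_mul_nonneg_right hGt (exp_pos _)

theorem ContinuousOn.intervalIntegrable_bdd_mul {a b C : ℝ} {f g : ℝ → ℝ}
    (hf : ContinuousOn f (uIcc a b)) (hg : Measurable g) (hC : ∀ s ∈ uIcc a b, |g s| ≤ C) :
    IntervalIntegrable (fun s => g s * f s) volume a b := by
  rw [intervalIntegrable_iff]
  refine (hf.integrableOn_compact isCompact_uIcc |>.mono_set uIoc_subset_uIcc).bdd_mul (c := C)
    hg.aestronglyMeasurable ?_
  rw [ae_restrict_iff' measurableSet_uIoc]
  exact .of_forall fun s hs => hC s (uIoc_subset_uIcc hs)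

namespace IsAdjointIntegral

variable {N : ℕ} {T M : ℝ} {α ξ lam : ℝ → ℕ → ℝ}

theorem intervalIntegrable_meanField (hα : IsAdmissible N T M α)
    (hlam : IsAdjointIntegral N T α ξ lam) {t : ℝ} (ht : t ∈ Icc 0 T) :
    IntervalIntegrable (fun s => (N : ℝ)⁻¹ * ∑ m ∈ Finset.Icc 1 N, (1 - α s m) * lam s m)
      volume 0 t := by
  have hsub : uIcc 0 t ⊆ Icc 0 T := uIcc_subset_Icc (left_mem_Icc.2 (ht.1.trans ht.2)) ht
  have hterm : ∀ m ∈ Finset.Icc 1 N,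
      IntervalIntegrable (fun s => (1 - α s m) * lam s m) volume 0 t := by
    refine fun m hm => ((hlam.1 m).mono hsub).intervalIntegrable_bdd_mul (C := 1)
      (measurable_const.sub (hα.1 m)) fun s hs => ?_
    obtain ⟨h0, h1⟩ := hα.2.1 s (hsub hs) m hm
    rw [abs_le]
    constructor <;> linarith
  have hsum := IntervalIntegrable.sum _ hterm
  rw [Finset.sum_fn] at hsum
  exact hsum.const_mul _

theorem sub_eq_add_integral (hα : IsAdmissible N T M α)
    (hξ : ∀ k, ContinuousOn (fun t => ξ t k) (Icc 0 T)) (hlam : IsAdjointIntegral N T α ξ lam)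
    {i j : ℕ} (hi : i ∈ Finset.Icc 1 N) (hj : j ∈ Finset.Icc 1 N) {t : ℝ} (ht : t ∈ Icc 0 T) :
    lam t i - lam t j = lam 0 i - lam 0 j +
      ∫ s in (0 : ℝ)..t, ((lam s i - lam s j) - 2 * (ξ s i - ξ s j)) := by
  have hsub : uIcc 0 t ⊆ Icc 0 T := uIcc_subset_Icc (left_mem_Icc.2 (ht.1.trans ht.2)) ht
  have hmean := hlam.intervalIntegrable_meanField hα ht
  have hint : ∀ k, IntervalIntegrable (fun s => lam s k - (N : ℝ)⁻¹ *
      (∑ m ∈ Finset.Icc 1 N, (1 - α s m) * lam s m) - 2 * ξ s k) volume 0 t := fun k =>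
    ((((hlam.1 k).mono hsub).intervalIntegrable).sub hmean).sub
      ((continuousOn_const.mul (hξ k)).mono hsub).intervalIntegrable
  have hdiff := intervalIntegral.integral_sub (hint i) (hint j)
  rw [hlam.2.2 t ht i hi, hlam.2.2 t ht j hj]
  rw [intervalIntegral.integral_congr (g := fun s => (lam s i - lam s j) - 2 * (ξ s i - ξ s j))
    (fun s _ => by ring)] at hdiff
  linarith

end IsAdjointIntegral

theorem integral_adjoint_ordered_general
    (N : ℕ) (T M : ℝ)
    (α : ℝ → ℕ → ℝ) (ξ0 : ℕ → ℝ) (ξ : ℝ → ℕ → ℝ)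
    (hα : IsAdmissible N T M α) (hξ : IsTrajectory N T α ξ0 ξ)
    (hordξ : ∀ t ∈ Set.Icc (0 : ℝ) T, ∀ i ∈ Finset.Icc 1 N, ∀ j ∈ Finset.Icc 1 N,
      i < j → ξ t j ≤ ξ t i)
    (lam : ℝ → ℕ → ℝ) (hlam : IsAdjointIntegral N T α ξ lam) :
    ∀ t ∈ Set.Icc (0 : ℝ) T, ∀ i ∈ Finset.Icc 1 N, ∀ j ∈ Finset.Icc 1 N,
      i < j → lam t j ≤ lam t i := by
  intro t ht i hi j hj hij
  have hT : lam T i - lam T j = 0 := by rw [hlam.2.1 i hi, hlam.2.1 j hj, sub_self]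
  refine sub_nonneg.1 <| nonneg_of_forall_eq_add_integral_sub (d := fun s => lam s i - lam s j)
    (g := fun s => 2 * (ξ s i - ξ s j))
    ((hlam.1 i).sub (hlam.1 j)) (continuousOn_const.mul ((hξ.1 i).sub (hξ.1 j)))
    (fun s hs => ?_) (fun s hs => hlam.sub_eq_add_integral hα hξ.1 hi hj hs) hT.ge ht
  linarith [hordξ s hs i hi j hj hij]

/-- If the trajectory is ordered on `[0,T]`, then so are the covectors of the
integral-cost adjoint system. -/
theorem integral_adjoint_ordered
    (N : ℕ) (hN : 1 ≤ N) (T M : ℝ) (hT : 0 < T) (hM : 0 < M)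
    (α : ℝ → ℕ → ℝ) (ξ0 : ℕ → ℝ) (ξ : ℝ → ℕ → ℝ)
    (hα : IsAdmissible N T M α) (hξ : IsTrajectory N T α ξ0 ξ)
    (hordξ : ∀ t ∈ Set.Icc (0 : ℝ) T, ∀ i ∈ Finset.Icc 1 N, ∀ j ∈ Finset.Icc 1 N,
      i < j → ξ t j ≤ ξ t i)
    (lam : ℝ → ℕ → ℝ) (hlam : IsAdjointIntegral N T α ξ lam) :
    ∀ t ∈ Set.Icc (0 : ℝ) T, ∀ i ∈ Finset.Icc 1 N, ∀ j ∈ Finset.Icc 1 N,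
      i < j → lam t j ≤ lam t i :=
  integral_adjoint_ordered_general N T M α ξ0 ξ hα hξ hordξ lam hlam

end
end
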